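/- arXiv:2503.13388 — 5 statements merged into one kernel-verified Lean document; each statement's English description precedes it below -/
import Mathlib

section
/- Let N ≥ 3. For every U ∈ U(N) there exist m = N(N−1)/2 unitary 2×2 matrices V₁, …, V_m ∈ U(2) and injective group homomorphisms f₁, …, f_m from U(2) to U(N) such that U = f_m(V_m) · f_{m−1}(V_{m−1}) ⋯ f₁(V₁). In particular, the set of elementary quantum gates generates the whole unitary group U(N). -/
open Matrix

section AuxiliaryLemmas

variable {n : ℕ}


/-- Every unitary matrix admits some `ω` on the unit circle with `A + ω•1` invertible. -/
lemma exists_omega (A : Matrix (Fin n) (Fin n) ℂ) :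
    ∃ ω : ℂ, star ω * ω = 1 ∧ IsUnit (A + ω • 1) := by
  have hfin : {x : ℂ | ¬ IsUnit (A + x • (1 : Matrix (Fin n) (Fin n) ℂ))}.Finite := by
    apply Set.Finite.subset (Polynomial.finite_setOf_isRoot (Matrix.charpoly_monic (-A)).ne_zero)
    intro x hx
    simp only [Set.mem_setOf_eq] at hx ⊢
    have hdet : (A + x • 1).det = 0 := by
      by_contra h
      exact hx ((Matrix.isUnit_iff_isUnit_det _).mpr (isUnit_iff_ne_zero.mpr h))
    have : Polynomial.eval x (Matrix.charpoly (-A)) = (A + x • 1).det := by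
      rw [Matrix.charpoly]
      rw [show Polynomial.eval x ((charmatrix (-A)).det)
          = ((Polynomial.evalRingHom x).mapMatrix (charmatrix (-A))).det from
        RingHom.map_det (Polynomial.evalRingHom x) (charmatrix (-A))]
      congr 1
      ext i j
      by_cases h : i = j <;>
        simp [h, charmatrix_apply, Matrix.diagonal_apply, Matrix.one_apply, Matrix.smul_apply,
          add_comm]
    unfold Polynomial.IsRoot
    rw [this, hdet]
  have hinj : Set.InjOn (fun t : ℝ => Complex.exp (t * Complex.I)) (Set.Icc 0 Real.pi) := by
    intro a ha b hb hab
    have : Real.cos a = Real.cos b := by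
      have := congrArg Complex.re hab
      simpa [Complex.exp_ofReal_mul_I_re] using this
    exact Real.injOn_cos ha hb this
  have hIcc : (Set.Icc (0:ℝ) Real.pi).Infinite :=
    Set.infinite_coe_iff.mp (Set.Icc.infinite Real.pi_pos)
  have himg : ((fun t : ℝ => Complex.exp (t * Complex.I)) '' Set.Icc 0 Real.pi).Infinite :=
    hIcc.image hinj
  obtain ⟨ω, hω1, hω2⟩ := (himg.diff hfin).nonempty
  obtain ⟨t, _, rfl⟩ := hω1
  refine ⟨_, ?_, not_not.mp hω2⟩
  have := Complex.norm_exp_ofReal_mul_I t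
  rw [show star (Complex.exp (↑t * Complex.I)) = (starRingEnd ℂ) (Complex.exp (↑t * Complex.I))
    from rfl, Complex.conj_mul', this]
  norm_num

theorem unitary_spectral' (n : ℕ) (U : Matrix.unitaryGroup (Fin n) ℂ) :
    ∃ (W : Matrix.unitaryGroup (Fin n) ℂ) (d : Fin n → ℂ),
      (U : Matrix (Fin n) (Fin n) ℂ)
        = (W : Matrix (Fin n) (Fin n) ℂ) * diagonal d * star (W : Matrix (Fin n) (Fin n) ℂ) := by
  set A : Matrix (Fin n) (Fin n) ℂ := (U : Matrix (Fin n) (Fin n) ℂ) with hAdef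
  have hA1 : star A * A = 1 := Matrix.mem_unitaryGroup_iff'.mp U.2
  have hA2 : A * star A = 1 := Matrix.mem_unitaryGroup_iff.mp U.2
  obtain ⟨ω, hω, hunit⟩ := exists_omega A
  have hω2 : ω * star ω = 1 := by rw [mul_comm]; exact hω
  set B : Matrix (Fin n) (Fin n) ℂ := star ω • A with hBdef
  have hstarB : star B = ω • star A := by
    rw [hBdef, star_smul, star_star]
  have hB1 : star B * B = 1 := by
    rw [hstarB, hBdef, Matrix.smul_mul, Matrix.mul_smul, smul_smul, hω2, one_smul, hA1]
  have hB2 : B * star B = 1 := by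
    rw [hstarB, hBdef, Matrix.smul_mul, Matrix.mul_smul, smul_smul, hω, one_smul, hA2]
  have hωu : IsUnit (star ω) := IsUnit.of_mul_eq_one ω hω
  have hBplus : IsUnit (B + 1) := by
    have key : B + 1 = star ω • (A + ω • 1) := by
      rw [smul_add, smul_smul, hω, one_smul, hBdef]
    rw [key]
    rw [Matrix.isUnit_iff_isUnit_det, Matrix.det_smul]
    exact (hωu.pow _).mul ((Matrix.isUnit_iff_isUnit_det _).mp hunit)
  have hdBp : IsUnit (B + 1).det := (Matrix.isUnit_iff_isUnit_det _).mp hBplus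
  have hdB : IsUnit B.det := IsUnit.of_mul_eq_one (star B).det
    (by rw [← Matrix.det_mul, hB2, Matrix.det_one])
  have hBinv : B⁻¹ = star B := Matrix.inv_eq_left_inv hB1
  have hc : (B - 1) * (B + 1) = (B + 1) * (B - 1) := by noncomm_ring
  have hcomm : (B - 1) * (B + 1)⁻¹ = (B + 1)⁻¹ * (B - 1) := by
    have step1 : (B + 1)⁻¹ * ((B + 1) * (B - 1)) * (B + 1)⁻¹ = (B - 1) * (B + 1)⁻¹ := by
      simp only [← mul_assoc]
      rw [Matrix.nonsing_inv_mul _ hdBp, one_mul]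
    have step2 : (B + 1)⁻¹ * ((B - 1) * (B + 1)) * (B + 1)⁻¹ = (B + 1)⁻¹ * (B - 1) := by
      rw [mul_assoc ((B + 1)⁻¹), mul_assoc, Matrix.mul_nonsing_inv _ hdBp, mul_one]
    rw [← step1, ← hc, step2]
  set H : Matrix (Fin n) (Fin n) ℂ := (-Complex.I) • ((B - 1) * (B + 1)⁻¹) with hHdef
  have hH : H.IsHermitian := by
    have e1 : B⁻¹ + 1 = B⁻¹ * (B + 1) := by
      rw [mul_add, mul_one, Matrix.nonsing_inv_mul _ hdB, add_comm]
    have e2 : B⁻¹ - 1 = B⁻¹ * (1 - B) := by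
      rw [mul_sub, mul_one, Matrix.nonsing_inv_mul _ hdB]
    show Hᴴ = H
    rw [hHdef, Matrix.conjTranspose_smul, Matrix.conjTranspose_mul,
      Matrix.conjTranspose_nonsing_inv, Matrix.conjTranspose_add, Matrix.conjTranspose_one]
    have hBH : Bᴴ = B⁻¹ := by rw [hBinv]; rfl
    rw [hBH]
    have e3 : (B⁻¹ + 1)⁻¹ = (B + 1)⁻¹ * B := by
      rw [e1, Matrix.mul_inv_rev, Matrix.nonsing_inv_nonsing_inv _ hdB]
    rw [Matrix.conjTranspose_sub, Matrix.conjTranspose_one, hBH, e3, e2]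
    have e6 : (B + 1)⁻¹ * B * (B⁻¹ * (1 - B)) = (B + 1)⁻¹ * (1 - B) := by
      rw [mul_assoc, ← mul_assoc B, Matrix.mul_nonsing_inv _ hdB, one_mul]
    rw [e6, hcomm, ← neg_sub B 1, mul_neg, smul_neg]
    have hstarI : star (-Complex.I) = Complex.I := by simp
    rw [hstarI, neg_smul]
  -- spectral theorem for H
  have hspec := hH.spectral_theorem
  set Vm : Matrix (Fin n) (Fin n) ℂ := (hH.eigenvectorUnitary : Matrix (Fin n) (Fin n) ℂ) with hVm
  set ev : Fin n → ℝ := hH.eigenvalues with hev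
  have hVV : star Vm * Vm = 1 := Matrix.mem_unitaryGroup_iff'.mp hH.eigenvectorUnitary.2
  have hVV' : Vm * star Vm = 1 := Matrix.mem_unitaryGroup_iff.mp hH.eigenvectorUnitary.2
  -- key algebraic identity
  have hkey : H * (B + 1) = (-Complex.I) • (B - 1) := by
    rw [hHdef, Matrix.smul_mul, mul_assoc, Matrix.nonsing_inv_mul _ hdBp, mul_one]
  have hHB : H * B = (-Complex.I) • (B - 1) - H := by
    rw [mul_add, mul_one] at hkey
    exact eq_sub_of_add_eq hkey
  have hmain : (1 - Complex.I • H) * B = 1 + Complex.I • H := by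
    rw [sub_mul, one_mul, Matrix.smul_mul, hHB, smul_sub, smul_smul,
      show Complex.I * -Complex.I = (1 : ℂ) by rw [mul_neg, Complex.I_mul_I, neg_neg],
      one_smul]
    abel
  have hofreal : (RCLike.ofReal ∘ ev : Fin n → ℂ) = fun k => (ev k : ℂ) := by
    funext k; simp [RCLike.ofReal]
  have hHform : H = Vm * diagonal (fun k => (ev k : ℂ)) * star Vm := by
    rw [← hofreal]; exact hspec
  set dP : Fin n → ℂ := fun k => ((1 : ℂ) - Complex.I * ev k)⁻¹ * ((1 : ℂ) + Complex.I * ev k)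
    with hdP
  set Dm : Matrix (Fin n) (Fin n) ℂ := diagonal (fun k => (1 : ℂ) - Complex.I * ev k) with hDm
  set Dp : Matrix (Fin n) (Fin n) ℂ := diagonal (fun k => (1 : ℂ) + Complex.I * ev k) with hDp
  have hne : ∀ k, (1 : ℂ) - Complex.I * ev k ≠ 0 := by
    intro k h
    have := congrArg Complex.re h
    simp [Complex.sub_re, Complex.mul_re] at this
  have hDmEq : Dm = 1 - Complex.I • diagonal (fun k => (ev k : ℂ)) := by
    rw [← Matrix.diagonal_smul, ← Matrix.diagonal_one, Matrix.diagonal_sub]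
    rfl
  have hDpEq : Dp = 1 + Complex.I • diagonal (fun k => (ev k : ℂ)) := by
    rw [← Matrix.diagonal_smul, ← Matrix.diagonal_one, Matrix.diagonal_add]
    rfl
  have h1m : 1 - Complex.I • H = Vm * Dm * star Vm := by
    rw [hHform, hDmEq, mul_sub, sub_mul, mul_one, hVV', Matrix.mul_smul, Matrix.smul_mul]
  have h1p : 1 + Complex.I • H = Vm * Dp * star Vm := by
    rw [hHform, hDpEq, mul_add, add_mul, mul_one, hVV', Matrix.mul_smul, Matrix.smul_mul]
  have hdDm : IsUnit Dm.det := by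
    rw [hDm, Matrix.det_diagonal]
    exact isUnit_iff_ne_zero.mpr (Finset.prod_ne_zero_iff.mpr fun k _ => hne k)
  have hP : Dm * (star Vm * B * Vm) = Dp := by
    have step : Dm * (star Vm * B * Vm) = star Vm * ((Vm * Dm * star Vm) * B) * Vm := by
      simp only [← mul_assoc]
      rw [hVV, one_mul]
    rw [step, ← h1m, hmain, h1p]
    simp only [← mul_assoc]
    rw [hVV, one_mul, mul_assoc, hVV, mul_one]
  have hcancel : Dm * diagonal dP = Dp := by
    rw [hDm, hDp, Matrix.diagonal_mul_diagonal]
    have harg : (fun i => ((1 : ℂ) - Complex.I * ev i) * dP i)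
        = fun k => (1 : ℂ) + Complex.I * ev k := by
      funext k
      rw [hdP]
      dsimp only
      rw [← mul_assoc, mul_inv_cancel₀ (hne k), one_mul]
    rw [harg]
  have hPdiag : star Vm * B * Vm = diagonal dP := by
    calc star Vm * B * Vm
        = Dm⁻¹ * (Dm * (star Vm * B * Vm)) := by
          rw [← mul_assoc, Matrix.nonsing_inv_mul _ hdDm, one_mul]
      _ = Dm⁻¹ * (Dm * diagonal dP) := by rw [hP, hcancel]
      _ = diagonal dP := by rw [← mul_assoc, Matrix.nonsing_inv_mul _ hdDm, one_mul]
  have hB_eq : B = Vm * diagonal dP * star Vm := by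
    have : Vm * (star Vm * B * Vm) * star Vm = B := by
      simp only [← mul_assoc]
      rw [hVV', one_mul, mul_assoc, hVV', mul_one]
    rw [← this, hPdiag]
  have hAB : A = ω • B := by rw [hBdef, smul_smul, hω2, one_smul]
  refine ⟨hH.eigenvectorUnitary, fun k => ω * dP k, ?_⟩
  show A = Vm * diagonal (fun k => ω * dP k) * star Vm
  rw [hAB, hB_eq]
  rw [show (diagonal (fun k => ω * dP k) : Matrix (Fin n) (Fin n) ℂ)
      = ω • diagonal dP from by rw [← Matrix.diagonal_smul]; rfl]
  rw [Matrix.mul_smul, Matrix.smul_mul]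



/-- Reindexing by an equivalence, as a group homomorphism between unitary groups. -/
def reindexUG' {α β : Type*} [Fintype α] [DecidableEq α] [Fintype β] [DecidableEq β]
    (e : α ≃ β) : Matrix.unitaryGroup α ℂ →* Matrix.unitaryGroup β ℂ where
  toFun A := ⟨(A : Matrix α α ℂ).submatrix e.symm e.symm, by
    rw [Matrix.mem_unitaryGroup_iff, Matrix.star_eq_conjTranspose,
      Matrix.conjTranspose_submatrix, Matrix.submatrix_mul_equiv,
      ← Matrix.star_eq_conjTranspose, Matrix.mem_unitaryGroup_iff.mp A.2,
      Matrix.submatrix_one_equiv]⟩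
  map_one' := by
    ext i j
    simp [Matrix.one_apply, e.symm.injective.eq_iff]
  map_mul' A B := by
    ext i j
    simp [Matrix.submatrix_mul_equiv]

lemma reindexUG_injective' {α β : Type*} [Fintype α] [DecidableEq α] [Fintype β] [DecidableEq β]
    (e : α ≃ β) : Function.Injective (reindexUG' e) := by
  intro A B h
  ext i j
  have := congrArg (fun M : Matrix.unitaryGroup β ℂ => (M : Matrix β β ℂ) (e i) (e j)) h
  simpa [reindexUG'] using this

/-- The block embedding `U(2) → U(2 ⊕ (N-2))`. -/
def blockUG' (M : ℕ) : Matrix.unitaryGroup (Fin 2) ℂ →* Matrix.unitaryGroup (Fin 2 ⊕ Fin M) ℂ where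
  toFun V := ⟨Matrix.fromBlocks (V : Matrix (Fin 2) (Fin 2) ℂ) 0 0 1, by
    rw [Matrix.mem_unitaryGroup_iff, Matrix.star_eq_conjTranspose,
      Matrix.fromBlocks_conjTranspose]
    have h : (V : Matrix (Fin 2) (Fin 2) ℂ) * star (V : Matrix (Fin 2) (Fin 2) ℂ) = 1 :=
      Matrix.mem_unitaryGroup_iff.mp V.2
    rw [Matrix.star_eq_conjTranspose] at h
    simp [Matrix.fromBlocks_multiply, h, Matrix.fromBlocks_one]⟩
  map_one' := by
    ext i j
    simp [Matrix.fromBlocks_one]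
  map_mul' A B := by
    ext i j
    simp [Matrix.fromBlocks_multiply]

lemma blockUG_injective' (M : ℕ) : Function.Injective (blockUG' M) := by
  intro A B h
  ext i j
  have := congrArg (fun X : Matrix.unitaryGroup (Fin 2 ⊕ Fin M) ℂ =>
    (X : Matrix (Fin 2 ⊕ Fin M) (Fin 2 ⊕ Fin M) ℂ) (Sum.inl i) (Sum.inl j)) h
  simpa [blockUG'] using this

/-- A diagonal `2×2` unitary with entries `a, 1`. -/
def diagU2' (a : ℂ) (ha : star a * a = 1) : Matrix.unitaryGroup (Fin 2) ℂ :=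
  ⟨Matrix.diagonal (fun i => if i = 0 then a else 1), by
    rw [Matrix.mem_unitaryGroup_iff', Matrix.star_eq_conjTranspose,
      Matrix.diagonal_conjTranspose, Matrix.diagonal_mul_diagonal]
    convert Matrix.diagonal_one using 2
    funext i
    by_cases h : i = 0
    · simpa [h] using ha
    · simp [h]⟩

variable {N : ℕ}

def sumEquiv' (hN : 2 ≤ N) : (Fin 2 ⊕ Fin (N - 2)) ≃ Fin N :=
  finSumFinEquiv.trans (finCongr (by omega))

/-- The standard embedding `U(2) → U(N)`. -/
def Emb' (hN : 2 ≤ N) : Matrix.unitaryGroup (Fin 2) ℂ →* Matrix.unitaryGroup (Fin N) ℂ :=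
  (reindexUG' (sumEquiv' hN)).comp (blockUG' (N - 2))

lemma Emb_injective' (hN : 2 ≤ N) : Function.Injective (Emb' hN) :=
  (reindexUG_injective' (sumEquiv' hN)).comp (blockUG_injective' (N - 2))

def pZero' (hN : 2 ≤ N) : Fin N := sumEquiv' hN (Sum.inl 0)

lemma Emb_diag' (hN : 2 ≤ N) (a : ℂ) (ha : star a * a = 1) :
    ((Emb' hN (diagU2' a ha)) : Matrix (Fin N) (Fin N) ℂ)
      = Matrix.diagonal (fun i => if i = pZero' hN then a else 1) := by
  show ((Matrix.fromBlocks ((diagU2' a ha : Matrix (Fin 2) (Fin 2) ℂ)) 0 0 1).submatrix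
      (sumEquiv' hN).symm (sumEquiv' hN).symm) = _
  have h1 : (1 : Matrix (Fin (N - 2)) (Fin (N - 2)) ℂ)
      = Matrix.diagonal (fun _ => 1) := Matrix.diagonal_one.symm
  rw [show ((diagU2' a ha : Matrix (Fin 2) (Fin 2) ℂ))
      = Matrix.diagonal (fun i => if i = 0 then a else 1) from rfl, h1,
    Matrix.fromBlocks_diagonal, Matrix.submatrix_diagonal_equiv]
  refine congrArg Matrix.diagonal (funext fun i => ?_)
  rcases h : (sumEquiv' hN).symm i with x | x
  · have hi : i = sumEquiv' hN (Sum.inl x) := by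
      rw [← h, Equiv.apply_symm_apply]
    simp only [Function.comp_apply, h, Sum.elim_inl]
    by_cases hx : x = 0
    · simp [hx, hi, pZero']
    · have : i ≠ pZero' hN := by
        rw [hi, pZero']
        intro hcon
        exact hx (Sum.inl.inj ((sumEquiv' hN).injective hcon))
      simp [hx, this]
  · have : i ≠ pZero' hN := by
      intro hcon
      rw [hcon, pZero', Equiv.symm_apply_apply] at h
      exact absurd h (by simp)
    simp only [Function.comp_apply, h, Sum.elim_inr]
    simp [this]

lemma gate_diag' (hN : 2 ≤ N) (k : Fin N) (a : ℂ) (ha : star a * a = 1) :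
    (((reindexUG' (Equiv.swap (pZero' hN) k)) (Emb' hN (diagU2' a ha))) : Matrix (Fin N) (Fin N) ℂ)
      = Matrix.diagonal (fun i => if i = k then a else 1) := by
  show ((Emb' hN (diagU2' a ha) : Matrix (Fin N) (Fin N) ℂ)).submatrix
      (Equiv.swap (pZero' hN) k).symm (Equiv.swap (pZero' hN) k).symm = _
  rw [Emb_diag' hN a ha, Equiv.symm_swap, Matrix.submatrix_diagonal_equiv]
  refine congrArg Matrix.diagonal (funext fun i => ?_)
  simp only [Function.comp_apply]
  by_cases h : i = k
  · simp [h, Equiv.swap_apply_right]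
  · have : Equiv.swap (pZero' hN) k i ≠ pZero' hN := by
      intro hcon
      have h2 := congrArg (Equiv.swap (pZero' hN) k) hcon
      rw [Equiv.swap_apply_self, Equiv.swap_apply_left] at h2
      exact h h2
    simp [this, h]

lemma diag_list_prod' : ∀ L : List (Fin N → ℂ),
    (L.map Matrix.diagonal).prod = Matrix.diagonal (fun i => (L.map (fun v => v i)).prod)
  | [] => by simp
  | v :: L => by
    simp only [List.map_cons, List.prod_cons, diag_list_prod' L, Matrix.diagonal_mul_diagonal]

end AuxiliaryLemmas

section Main
variable {N : ℕ}

/-- **Universality of elementary quantum gates.**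
For `N ≥ 3`, every unitary `U ∈ U(N)` is a product of `m = N(N-1)/2` elementary
quantum gates, i.e. images of `2×2` unitaries under injective group homomorphisms
`U(2) → U(N)`: `U = f_m(V_m) ⋯ f_1(V_1)`. -/
theorem universal_dictionary (N : ℕ) (hN : 3 ≤ N)
    (U : Matrix.unitaryGroup (Fin N) ℂ) :
    ∃ (V : Fin (N * (N - 1) / 2) → Matrix.unitaryGroup (Fin 2) ℂ)
      (f : Fin (N * (N - 1) / 2) →
        (Matrix.unitaryGroup (Fin 2) ℂ →* Matrix.unitaryGroup (Fin N) ℂ)),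
      (∀ k, Function.Injective (f k)) ∧
      U = ((List.ofFn fun k => (f k) (V k)).reverse).prod := by
  have hN2 : 2 ≤ N := by omega
  have hNpos : 0 < N := by omega
  set m := N * (N - 1) / 2 with hm
  have hNm : N ≤ m := by
    have h2 : N * 2 ≤ N * (N - 1) := Nat.mul_le_mul_left _ (by omega)
    calc N = N * 2 / 2 := by omega
      _ ≤ N * (N - 1) / 2 := Nat.div_le_div_right h2
  obtain ⟨W, d, hWd⟩ := unitary_spectral' N U
  have hWV : star (W : Matrix (Fin N) (Fin N) ℂ) * W = 1 := Matrix.mem_unitaryGroup_iff'.mp W.2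
  have hWV' : (W : Matrix (Fin N) (Fin N) ℂ) * star (W : Matrix (Fin N) (Fin N) ℂ) = 1 :=
    Matrix.mem_unitaryGroup_iff.mp W.2
  have hdiagmem : Matrix.diagonal d ∈ Matrix.unitaryGroup (Fin N) ℂ := by
    have hmat : Matrix.diagonal d
        = star (W : Matrix (Fin N) (Fin N) ℂ) * U * W := by
      rw [hWd]
      simp only [← mul_assoc]
      rw [hWV, one_mul, mul_assoc, hWV, mul_one]
    rw [hmat]
    exact mul_mem (mul_mem (Unitary.star_mem W.2) U.2) W.2
  have hd : ∀ i, star (d i) * d i = 1 := by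
    intro i
    have h1 := Matrix.mem_unitaryGroup_iff'.mp hdiagmem
    rw [Matrix.star_eq_conjTranspose, Matrix.diagonal_conjTranspose,
      Matrix.diagonal_mul_diagonal] at h1
    have h2 := congrArg (fun M : Matrix (Fin N) (Fin N) ℂ => M i i) h1
    simpa using h2
  set tgt : Fin m → Fin N := fun k => if h : (k : ℕ) < N then ⟨k, h⟩ else ⟨0, hNpos⟩ with htgt
  set c : Fin m → ℂ := fun k => if h : (k : ℕ) < N then d ⟨k, h⟩ else 1 with hcdef
  have hcu : ∀ k, star (c k) * (c k) = 1 := by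
    intro k
    rw [hcdef]
    dsimp only
    split
    · exact hd _
    · simp
  set φ : Matrix.unitaryGroup (Fin N) ℂ →* Matrix.unitaryGroup (Fin N) ℂ
    := (MulAut.conj W).toMonoidHom with hφ
  set h : Fin m → Matrix.unitaryGroup (Fin N) ℂ :=
    fun k => (reindexUG' (Equiv.swap (pZero' hN2) (tgt k))) (Emb' hN2 (diagU2' (c k) (hcu k)))
    with hh
  refine ⟨fun k => diagU2' (c k) (hcu k),
    fun k => φ.comp ((reindexUG' (Equiv.swap (pZero' hN2) (tgt k))).comp (Emb' hN2)), ?_, ?_⟩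
  · intro k
    exact ((MulAut.conj W).injective.comp
      ((reindexUG_injective' _).comp (Emb_injective' hN2)))
  set D : Matrix.unitaryGroup (Fin N) ℂ := ⟨Matrix.diagonal d, hdiagmem⟩ with hD
  have hofn : (List.ofFn fun k =>
      (φ.comp ((reindexUG' (Equiv.swap (pZero' hN2) (tgt k))).comp (Emb' hN2)))
        (diagU2' (c k) (hcu k))) = (List.ofFn h).map φ := by
    rw [List.map_ofFn]
    rfl
  rw [hofn, ← List.map_reverse, ← map_list_prod φ]
  have hprod : (List.ofFn h).reverse.prod = D := by
    apply Subtype.ext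
    rw [SubmonoidClass.coe_list_prod]
    have hcoe : (fun (x : Matrix.unitaryGroup (Fin N) ℂ) => (x : Matrix (Fin N) (Fin N) ℂ)) ∘ h
        = fun k => Matrix.diagonal (fun i => if i = tgt k then c k else 1) := by
      funext k
      exact gate_diag' hN2 (tgt k) (c k) (hcu k)
    rw [List.map_reverse, List.map_ofFn, hcoe]
    have hstep : (List.ofFn fun k =>
        Matrix.diagonal (fun i => if i = tgt k then c k else (1:ℂ)))
        = (List.ofFn fun k => (fun i : Fin N => if i = tgt k then c k else (1:ℂ))).map
            Matrix.diagonal := by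
      rw [List.map_ofFn]
      rfl
    rw [hstep]
    rw [← List.map_reverse, diag_list_prod']
    show Matrix.diagonal _ = Matrix.diagonal d
    refine congrArg Matrix.diagonal (funext fun i => ?_)
    rw [List.map_reverse, List.prod_reverse, List.map_ofFn, List.prod_ofFn]
    have hk0 : (i : ℕ) < m := lt_of_lt_of_le i.isLt hNm
    rw [Finset.prod_eq_single (⟨(i : ℕ), hk0⟩ : Fin m)]
    · have htg : tgt ⟨(i : ℕ), hk0⟩ = i := by
        rw [htgt]
        dsimp only
        rw [dif_pos i.isLt]
      have hcc : c ⟨(i : ℕ), hk0⟩ = d i := by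
        rw [hcdef]
        dsimp only
        rw [dif_pos i.isLt]
      simp [htg, hcc]
    · intro b _ hb
      dsimp only [Function.comp_apply]
      by_cases hbN : (b : ℕ) < N
      · have htb : tgt b = ⟨(b : ℕ), hbN⟩ := by
          rw [htgt]
          dsimp only
          split
          · rfl
          · next hcon => exact absurd hbN hcon
        have : i ≠ tgt b := by
          rw [htb]
          intro hcon
          exact hb (Fin.ext (congrArg Fin.val hcon).symm)
        rw [if_neg this]
      · have hcb : c b = 1 := by
          rw [hcdef]
          dsimp only
          split
          · next hcon => exact absurd hcon hbN
          · rfl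
        rw [hcb, ite_self]
    · intro hni
      exact absurd (Finset.mem_univ _) hni
  rw [hprod]
  apply Subtype.ext
  have hconj : ((φ D : Matrix.unitaryGroup (Fin N) ℂ) : Matrix (Fin N) (Fin N) ℂ)
      = (W : Matrix (Fin N) (Fin N) ℂ) * Matrix.diagonal d
        * star (W : Matrix (Fin N) (Fin N) ℂ) := by
    rw [hφ]
    show (((W * D * W⁻¹ : Matrix.unitaryGroup (Fin N) ℂ)) : Matrix (Fin N) (Fin N) ℂ) = _
    rw [← Unitary.star_eq_inv]
    push_cast
    rfl
  rw [hconj]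
  exact hWd

end Main
end

section
/- Let N ≥ 3 and let ψ ∈ ℂ^N be a nonzero vector. Then there exist N−1 pairs (V₁, f₁), …, (V_{N−1}, f_{N−1}), with each V_k ∈ U(2) and each f_k an injective group homomorphism from U(2) to U(N), such that f_{N−1}(V_{N−1}) ⋯ f₁(V₁) · ψ = ‖ψ‖ · e₁, where e₁ is the first standard basis vector of ℂ^N (all coordinates of the resulting vector vanish except the first, which equals the Euclidean norm of ψ). -/
open Matrix



noncomputable section QGAux
namespace QGAux

/-- Sum over `Fin N` of a function supported on indices `< 2`. -/
lemma sum_fin_lt_two {M : Type*} [AddCommMonoid M] {N : ℕ} (hN : 2 ≤ N)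
    (f : Fin N → M) (hf : ∀ k : Fin N, 2 ≤ k.1 → f k = 0) :
    ∑ k, f k = f ⟨0, by omega⟩ + f ⟨1, by omega⟩ := by
  rw [← Finset.sum_subset (Finset.subset_univ {(⟨0, by omega⟩ : Fin N), ⟨1, by omega⟩})
      (fun x _ hx => hf x (by
        simp only [Finset.mem_insert, Finset.mem_singleton, Fin.ext_iff] at hx
        omega))]
  rw [Finset.sum_pair (by simp [Fin.ext_iff])]

/-- Top-left `2×2` block embedding of a matrix into `N×N` matrices. -/
def emb (N : ℕ) (A : Matrix (Fin 2) (Fin 2) ℂ) : Matrix (Fin N) (Fin N) ℂ :=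
  Matrix.of fun i j =>
    if h : i.1 < 2 ∧ j.1 < 2 then A ⟨i.1, h.1⟩ ⟨j.1, h.2⟩ else if i = j then 1 else 0

lemma emb_apply_lt {N : ℕ} (A : Matrix (Fin 2) (Fin 2) ℂ) {i j : Fin N}
    (hi : i.1 < 2) (hj : j.1 < 2) : emb N A i j = A ⟨i.1, hi⟩ ⟨j.1, hj⟩ :=
  dif_pos ⟨hi, hj⟩

lemma emb_apply_not {N : ℕ} (A : Matrix (Fin 2) (Fin 2) ℂ) {i j : Fin N}
    (h : ¬(i.1 < 2 ∧ j.1 < 2)) : emb N A i j = if i = j then 1 else 0 :=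
  dif_neg h

lemma emb_one {N : ℕ} : emb N 1 = 1 := by
  ext i j
  by_cases h : i.1 < 2 ∧ j.1 < 2
  · rw [emb_apply_lt _ h.1 h.2, Matrix.one_apply, Matrix.one_apply]
    simp [Fin.ext_iff]
  · rw [emb_apply_not _ h, Matrix.one_apply]

lemma emb_star {N : ℕ} (A : Matrix (Fin 2) (Fin 2) ℂ) :
    emb N Aᴴ = (emb N A)ᴴ := by
  ext i j
  rw [Matrix.conjTranspose_apply]
  by_cases h : i.1 < 2 ∧ j.1 < 2
  · rw [emb_apply_lt _ h.1 h.2, emb_apply_lt _ h.2 h.1, Matrix.conjTranspose_apply]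
  · rw [emb_apply_not _ h, emb_apply_not _ (fun hc => h ⟨hc.2, hc.1⟩)]
    split_ifs with h1 h2 h2
    · simp
    · exact absurd h1.symm h2
    · exact absurd h2.symm h1
    · simp

lemma emb_mul {N : ℕ} (hN : 2 ≤ N) (A B : Matrix (Fin 2) (Fin 2) ℂ) :
    emb N (A * B) = emb N A * emb N B := by
  ext i j
  rw [Matrix.mul_apply]
  by_cases hi : i.1 < 2
  · by_cases hj : j.1 < 2
    · rw [sum_fin_lt_two hN _ (fun k hk => by
        rw [emb_apply_not A (fun hc => by omega), if_neg (by simp [Fin.ext_iff]; omega),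
          zero_mul])]
      rw [emb_apply_lt _ hi hj, Matrix.mul_apply, Fin.sum_univ_two]
      rw [emb_apply_lt A hi (by simp), emb_apply_lt A hi (by simp),
        emb_apply_lt B (by simp) hj, emb_apply_lt B (by simp) hj]
      rfl
    · have hB : ∀ k : Fin N, emb N B k j = if k = j then 1 else 0 := by
        intro k
        exact emb_apply_not B (fun hc => hj hc.2)
      have : ∀ k : Fin N, emb N A i k * emb N B k j = 0 := by
        intro k
        rw [hB k]
        rcases eq_or_ne k j with rfl | hkj
        · rw [emb_apply_not A (fun hc => hj hc.2), if_neg (by simp [Fin.ext_iff]; omega)]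
          simp
        · simp [hkj]
      rw [Finset.sum_congr rfl (fun k _ => this k), Finset.sum_const_zero,
        emb_apply_not _ (fun hc => hj hc.2), if_neg (by simp [Fin.ext_iff]; omega)]
  · have hA : ∀ k : Fin N, emb N A i k = if i = k then 1 else 0 := fun k =>
      emb_apply_not A (fun hc => hi hc.1)
    have : ∀ k : Fin N, emb N A i k * emb N B k j = if i = k then emb N B k j else 0 := by
      intro k
      rw [hA k]
      split_ifs <;> simp
    rw [Finset.sum_congr rfl (fun k _ => this k), Finset.sum_ite_eq, if_pos (Finset.mem_univ _)]
    rw [emb_apply_not _ (fun hc => hi hc.1), emb_apply_not _ (fun hc => hi hc.1)]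

/-- The block embedding as a monoid hom between unitary groups. -/
def embHom {N : ℕ} (hN : 2 ≤ N) :
    Matrix.unitaryGroup (Fin 2) ℂ →* Matrix.unitaryGroup (Fin N) ℂ where
  toFun A := ⟨emb N A, by
    rw [Matrix.mem_unitaryGroup_iff']
    rw [Matrix.star_eq_conjTranspose, ← emb_star, ← emb_mul hN]
    rw [← Matrix.star_eq_conjTranspose,
      (Matrix.mem_unitaryGroup_iff'.mp A.2 : star (A : Matrix (Fin 2) (Fin 2) ℂ) * A = 1),
      emb_one]⟩
  map_one' := Subtype.ext emb_one
  map_mul' A B := Subtype.ext (emb_mul hN _ _)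

lemma embHom_injective {N : ℕ} (hN : 2 ≤ N) : Function.Injective (embHom (N := N) hN) := by
  intro A A' h
  have h' : emb N (A : Matrix (Fin 2) (Fin 2) ℂ) = emb N (A' : Matrix (Fin 2) (Fin 2) ℂ) :=
    Subtype.ext_iff.mp h
  apply Subtype.ext
  ext p q
  have := congrFun (congrFun h' ⟨p.1, by omega⟩) ⟨q.1, by omega⟩
  rwa [emb_apply_lt _ (by simpa using p.2) (by simpa using q.2), emb_apply_lt _ (by simpa using p.2) (by simpa using q.2),
    Fin.eta, Fin.eta] at this

lemma prod_reverse_ofFn {M : Type*} [Monoid M] {n : ℕ} (hn : 0 < n) (g : Fin n → M)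
    (h : ∀ k, k ≠ ⟨0, hn⟩ → g k = 1) : ((List.ofFn g).reverse).prod = g ⟨0, hn⟩ := by
  obtain ⟨m, rfl⟩ := Nat.exists_eq_succ_of_ne_zero hn.ne'
  rw [List.ofFn_succ, List.reverse_cons, List.prod_append, List.prod_cons, List.prod_nil,
    mul_one]
  have h1 : (List.ofFn fun i : Fin m => g i.succ).reverse.prod = 1 := by
    apply List.prod_eq_one
    intro x hx
    rw [List.mem_reverse, List.mem_ofFn] at hx
    obtain ⟨i, rfl⟩ := hx
    exact h _ (by simp [Fin.ext_iff])
  rw [h1, one_mul]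
  rfl

lemma unitary_2x2 {a c : ℂ} (key : star a * a + star c * c = 1) :
    (!![a, -(star c); c, star a]) ∈ Matrix.unitaryGroup (Fin 2) ℂ := by
  have key' : (starRingEnd ℂ) a * a + (starRingEnd ℂ) c * c = 1 := key
  rw [Matrix.mem_unitaryGroup_iff']
  ext i j
  rw [Matrix.mul_apply, Fin.sum_univ_two]
  fin_cases i <;> fin_cases j
  · simp [Matrix.conjTranspose_apply, Matrix.one_apply]
    linear_combination key'
  · simp [Matrix.conjTranspose_apply, Matrix.one_apply]
    ring
  · simp [Matrix.conjTranspose_apply, Matrix.one_apply]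
    ring_nf
  · simp [Matrix.conjTranspose_apply, Matrix.one_apply]
    linear_combination key'

end QGAux


open Matrix Finset

noncomputable section QGOnb
namespace QGAux

local notation "⟪" x ", " y "⟫" => @inner ℂ _ _ x y

lemma euclidean_inner_eq {N : ℕ} (x y : EuclideanSpace ℂ (Fin N)) :
    ⟪x, y⟫ = ∑ j, star (x j) * y j := by
  rw [PiLp.inner_apply]
  simp only [RCLike.inner_apply, starRingEnd_apply]
  exact Finset.sum_congr rfl fun _ _ => mul_comm _ _

lemma exists_good_onb {N : ℕ} (hN : 3 ≤ N) (u : EuclideanSpace ℂ (Fin N)) (hu : ‖u‖ = 1) :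
    ∃ b : OrthonormalBasis (Fin N) ℂ (EuclideanSpace ℂ (Fin N)),
      b ⟨0, by linarith⟩ = u ∧ ∀ q : Fin N, 2 ≤ q.1 → (b q) ⟨0, by linarith⟩ = 0 := by
  have hrank : Module.finrank ℂ (EuclideanSpace ℂ (Fin N)) = Fintype.card (Fin N) := by
    simp
  set i0 : Fin N := ⟨0, by omega⟩ with hi0
  set i1 : Fin N := ⟨1, by omega⟩ with hi1
  set e0 : EuclideanSpace ℂ (Fin N) := EuclideanSpace.single i0 (1 : ℂ) with he0
  have hinner_e0 : ∀ x : EuclideanSpace ℂ (Fin N), ⟪x, e0⟫ = star (x i0) := by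
    intro x
    rw [he0, EuclideanSpace.inner_single_right, one_mul, starRingEnd_apply]
  -- the component of `e0` orthogonal to `u`
  set v : EuclideanSpace ℂ (Fin N) := e0 - ⟪u, e0⟫ • u with hv
  have huu : ⟪u, u⟫ = 1 := by
    rw [inner_self_eq_norm_sq_to_K, hu]; norm_num
  have huv : ⟪u, v⟫ = 0 := by
    rw [hv, inner_sub_right, inner_smul_right, huu, mul_one, sub_self]
  by_cases hv0 : v = 0
  · -- `e0` is a multiple of `u`
    have hortho : Orthonormal ℂ (({i0} : Set (Fin N)).restrict (fun _ => u)) := by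
      rw [orthonormal_iff_ite]
      rintro ⟨i, hi⟩ ⟨j, hj⟩
      simp only [Set.mem_singleton_iff] at hi hj
      subst hi; subst hj
      simpa [Set.restrict, Set.domRestrict_apply] using huu
    obtain ⟨b, hb⟩ := hortho.exists_orthonormalBasis_extension_of_card_eq hrank
    have hb0 : b i0 = u := hb i0 rfl
    refine ⟨b, hb0, fun q hq => ?_⟩
    have hq0 : q ≠ i0 := by simp [Fin.ext_iff, hi0]; omega
    have : ⟪b q, e0⟫ = 0 := by
      have he : e0 = ⟪u, e0⟫ • u := by
        have := hv0; rw [hv, sub_eq_zero] at this; exact this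
      rw [he, inner_smul_right, ← hb0,
        (orthonormal_iff_ite.mp b.orthonormal q i0), if_neg hq0, mul_zero]
    have := hinner_e0 (b q) ▸ this
    exact star_eq_zero.mp (by rw [← hinner_e0]; exact ‹⟪b q, e0⟫ = 0›)
  · set c1 : EuclideanSpace ℂ (Fin N) := ((‖v‖ : ℂ))⁻¹ • v with hc1
    have hc1norm : ‖c1‖ = 1 := by
      rw [hc1, norm_smul, norm_inv, Complex.norm_real, Real.norm_of_nonneg (norm_nonneg v),
        inv_mul_cancel₀ (norm_ne_zero_iff.mpr hv0)]
    have huc1 : ⟪u, c1⟫ = 0 := by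
      rw [hc1, inner_smul_right, huv, mul_zero]
    set g : Fin N → EuclideanSpace ℂ (Fin N) := fun k => if k = i0 then u else c1 with hg
    have hortho : Orthonormal ℂ (({i0, i1} : Set (Fin N)).restrict g) := by
      rw [orthonormal_iff_ite]
      rintro ⟨i, hi⟩ ⟨j, hj⟩
      simp only [Set.mem_insert_iff, Set.mem_singleton_iff] at hi hj
      have h01 : i0 ≠ i1 := by simp [hi0, hi1, Fin.ext_iff]
      have hcc : ⟪c1, c1⟫ = 1 := by
        rw [inner_self_eq_norm_sq_to_K, hc1norm]; norm_num
      have hc1u : ⟪c1, u⟫ = 0 := by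
        rw [← inner_conj_symm, huc1, map_zero]
      rcases hi with rfl | rfl <;> rcases hj with rfl | rfl <;>
        simp [Set.restrict, Set.domRestrict_apply, hu, hc1norm, hg, Subtype.ext_iff, h01, h01.symm, huu, hcc, huc1, hc1u]
    obtain ⟨b, hb⟩ := hortho.exists_orthonormalBasis_extension_of_card_eq hrank
    have hb0 : b i0 = u := by
      have := hb i0 (by simp); simpa [hg] using this
    have hb1 : b i1 = c1 := by
      have h01 : i1 ≠ i0 := by simp [hi0, hi1, Fin.ext_iff]
      have := hb i1 (by simp); simpa [hg, h01] using this
    refine ⟨b, hb0, fun q hq => ?_⟩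
    have hq0 : q ≠ i0 := by simp [Fin.ext_iff, hi0]; omega
    have hq1 : q ≠ i1 := by simp [Fin.ext_iff, hi1]; omega
    have horth := orthonormal_iff_ite.mp b.orthonormal
    have : ⟪b q, e0⟫ = 0 := by
      have he : e0 = v + ⟪u, e0⟫ • u := by rw [hv]; abel
      have hvC : v = (‖v‖ : ℂ) • c1 := by
        rw [hc1, smul_smul, mul_inv_cancel₀
          (by exact_mod_cast norm_ne_zero_iff.mpr hv0 : ((‖v‖ : ℂ)) ≠ 0), one_smul]
      rw [he, inner_add_right, inner_smul_right, hvC, inner_smul_right,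
        ← hb0, ← hb1, horth q i0, horth q i1, if_neg hq0, if_neg hq1]
      ring
    exact star_eq_zero.mp (by rw [← hinner_e0]; exact this)

end QGAux

/-- **Reduction of a nonzero vector to `‖ψ‖ e₁` by elementary quantum gates.**
For `N ≥ 3` and a nonzero `ψ ∈ ℂ^N`, there are `N-1` elementary quantum gates
`f_k(V_k)` (with `V_k ∈ U(2)` and `f_k : U(2) → U(N)` injective group homomorphisms)
whose product, applied to `ψ`, gives `‖ψ‖` times the first standard basis vector. -/
theorem reduction_to_first_basis_vector (N : ℕ) (hN : 3 ≤ N)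
    (ψ : EuclideanSpace ℂ (Fin N)) (hψ : ψ ≠ 0) :
    ∃ (V : Fin (N - 1) → Matrix.unitaryGroup (Fin 2) ℂ)
      (f : Fin (N - 1) →
        (Matrix.unitaryGroup (Fin 2) ℂ →* Matrix.unitaryGroup (Fin N) ℂ)),
      (∀ k, Function.Injective (f k)) ∧
      Matrix.toEuclideanLin
        ((((List.ofFn fun k => (f k) (V k)).reverse).prod :
            Matrix.unitaryGroup (Fin N) ℂ) : Matrix (Fin N) (Fin N) ℂ) ψ
        = (‖ψ‖ : ℂ) • EuclideanSpace.single (⟨0, by omega⟩ : Fin N) (1 : ℂ) := by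
  classical
  have hN2 : 2 ≤ N := by omega
  set i0 : Fin N := ⟨0, by omega⟩ with hi0
  set i1 : Fin N := ⟨1, by omega⟩ with hi1
  have hψnorm : ‖ψ‖ ≠ 0 := norm_ne_zero_iff.mpr hψ
  set u : EuclideanSpace ℂ (Fin N) := ((‖ψ‖ : ℂ))⁻¹ • ψ with hudef
  have hu : ‖u‖ = 1 := by
    rw [hudef, norm_smul, norm_inv, Complex.norm_real, Real.norm_of_nonneg (norm_nonneg ψ),
      inv_mul_cancel₀ hψnorm]
  obtain ⟨b, hb0, hb2⟩ := QGAux.exists_good_onb hN u hu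
  have hψu : ∀ j : Fin N, ψ j = (‖ψ‖ : ℂ) * (b i0) j := by
    intro j
    rw [hb0, hudef, PiLp.smul_apply, smul_eq_mul, ← mul_assoc,
      mul_inv_cancel₀ (by exact_mod_cast hψnorm : ((‖ψ‖ : ℂ)) ≠ 0), one_mul]
  -- the unitary matrix whose columns are the basis vectors
  set W : Matrix (Fin N) (Fin N) ℂ := Matrix.of fun i j => (b j) i with hW
  have horth := orthonormal_iff_ite.mp b.orthonormal
  have hWmem : W ∈ Matrix.unitaryGroup (Fin N) ℂ := by
    rw [Matrix.mem_unitaryGroup_iff']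
    ext i j
    rw [Matrix.mul_apply, Matrix.one_apply]
    have : ∀ k, (star W) i k * W k j = star ((b i) k) * (b j) k := by
      intro k
      rw [Matrix.star_apply, hW]
      rfl
    rw [Finset.sum_congr rfl fun k _ => this k, ← QGAux.euclidean_inner_eq, horth i j]
  have hWW : W * star W = 1 := Matrix.mem_unitaryGroup_iff.mp hWmem
  -- the 2×2 unitary gate
  set a : ℂ := star ((b i0) i0) with ha
  set c : ℂ := star ((b i1) i0) with hc
  have key : star a * a + star c * c = 1 := by
    have h00 := congrFun (congrFun hWW i0) i0
    rw [Matrix.mul_apply, Matrix.one_apply_eq] at h00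
    have hterm : ∀ q, W i0 q * (star W) q i0 = (b q) i0 * star ((b q) i0) := by
      intro q
      rw [Matrix.star_apply, hW]
      rfl
    rw [Finset.sum_congr rfl fun q _ => hterm q] at h00
    rw [QGAux.sum_fin_lt_two hN2 _ (fun q hq => by rw [hb2 q hq, zero_mul]) ] at h00
    rw [ha, hc, star_star, star_star]
    exact h00
  set B : Matrix (Fin 2) (Fin 2) ℂ := !![a, -(star c); c, star a] with hB
  have hBmem : B ∈ Matrix.unitaryGroup (Fin 2) ℂ := hB ▸ QGAux.unitary_2x2 key
  -- assemble the gates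
  have hn1 : 0 < N - 1 := by omega
  set k0 : Fin (N - 1) := ⟨0, hn1⟩ with hk0
  set Wu : Matrix.unitaryGroup (Fin N) ℂ := ⟨W, hWmem⟩ with hWu
  set V1 : Matrix.unitaryGroup (Fin 2) ℂ := ⟨B, hBmem⟩ with hV1
  refine ⟨fun k => if k = k0 then V1 else 1,
    fun _ => (MulAut.conj Wu).toMonoidHom.comp (QGAux.embHom hN2), fun k => ?_, ?_⟩
  · exact (MulAut.conj Wu).injective.comp (QGAux.embHom_injective hN2)
  · have hprod : (((List.ofFn fun k : Fin (N - 1) =>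
        ((MulAut.conj Wu).toMonoidHom.comp (QGAux.embHom hN2))
          (if k = k0 then V1 else 1)).reverse).prod)
        = ((MulAut.conj Wu).toMonoidHom.comp (QGAux.embHom hN2)) V1 := by
      rw [QGAux.prod_reverse_ofFn hn1 _ (fun k hk => by
        rw [if_neg (by exact hk), _root_.map_one])]
      rw [if_pos rfl]
    rw [hprod]
    -- the matrix of the single nontrivial gate
    have hcoe : (((((MulAut.conj Wu).toMonoidHom.comp (QGAux.embHom hN2)) V1) :
        Matrix.unitaryGroup (Fin N) ℂ) : Matrix (Fin N) (Fin N) ℂ)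
        = W * QGAux.emb N B * star W := by
      simp [MulAut.conj_apply, hWu, hV1, QGAux.embHom, mul_assoc]
    rw [hcoe]
    -- now compute the action on ψ
    rw [Matrix.toEuclideanLin_apply]
    apply (WithLp.equiv 2 (Fin N → ℂ)).injective
    rw [← WithLp.equiv_symm_apply, Equiv.apply_symm_apply]
    funext i
    rw [← Matrix.mulVec_mulVec, ← Matrix.mulVec_mulVec]
    -- step 1
    have h1 : star W *ᵥ (WithLp.equiv 2 (Fin N → ℂ)) ψ
        = fun q => (‖ψ‖ : ℂ) * (if q = i0 then 1 else 0) := by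
      funext q
      rw [Matrix.mulVec]
      show ∑ j, (star W) q j * ψ j = _
      have : ∀ j, (star W) q j * ψ j = (‖ψ‖ : ℂ) * (star ((b q) j) * (b i0) j) := by
        intro j
        rw [Matrix.star_apply, hW, hψu j]
        show star ((b q) j) * ((‖ψ‖ : ℂ) * (b i0) j) = _
        ring
      rw [Finset.sum_congr rfl fun j _ => this j, ← Finset.mul_sum,
        ← QGAux.euclidean_inner_eq, horth q i0]
    rw [show ψ.ofLp = (WithLp.equiv 2 (Fin N → ℂ)) ψ from rfl, h1]
    -- step 2
    have h2 : QGAux.emb N B *ᵥ (fun q => (‖ψ‖ : ℂ) * (if q = i0 then 1 else 0))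
        = fun q => (‖ψ‖ : ℂ) * star ((b q) i0) := by
      funext q
      rw [Matrix.mulVec]
      show ∑ j, QGAux.emb N B q j * ((‖ψ‖ : ℂ) * (if j = i0 then 1 else 0)) = _
      rw [Finset.sum_congr rfl (fun j _ => by
        rw [show QGAux.emb N B q j * ((‖ψ‖ : ℂ) * (if j = i0 then 1 else 0))
          = if j = i0 then QGAux.emb N B q j * (‖ψ‖ : ℂ) else 0 by split_ifs <;> ring])]
      rw [Finset.sum_ite_eq' Finset.univ i0 (fun j => QGAux.emb N B q j * (‖ψ‖ : ℂ)),
        if_pos (Finset.mem_univ _)]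
      have hcol : QGAux.emb N B q i0 = star ((b q) i0) := by
        by_cases hq : q.1 < 2
        · rw [QGAux.emb_apply_lt _ hq (by simp [hi0])]
          have : q.1 = 0 ∨ q.1 = 1 := by omega
          rcases this with h | h
          · have hq0 : q = i0 := by simp [Fin.ext_iff, hi0, h]
            subst hq0
            simp only [hB, ha]
            norm_num [show (⟨(⟨0, by omega⟩ : Fin N).1, hq⟩ : Fin 2) = 0 from by
              simp [Fin.ext_iff], show (⟨i0.1, by simp [hi0]⟩ : Fin 2) = 0 from by
              simp [Fin.ext_iff, hi0]]
          · have hq1 : q = i1 := by simp [Fin.ext_iff, hi1, h]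
            subst hq1
            simp only [hB, hc]
            norm_num [show (⟨(⟨1, by omega⟩ : Fin N).1, hq⟩ : Fin 2) = 1 from by
              simp [Fin.ext_iff], show (⟨i0.1, by simp [hi0]⟩ : Fin 2) = 0 from by
              simp [Fin.ext_iff, hi0]]
        · rw [QGAux.emb_apply_not _ (fun hcon => hq hcon.1),
            if_neg (by simp [Fin.ext_iff, hi0]; omega), hb2 q (by omega), star_zero]
      rw [hcol]
      ring
    rw [h2]
    -- step 3
    have h3 : (W *ᵥ fun q => (‖ψ‖ : ℂ) * star ((b q) i0)) i
        = (‖ψ‖ : ℂ) * (if i = i0 then 1 else 0) := by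
      rw [Matrix.mulVec]
      show ∑ q, W i q * ((‖ψ‖ : ℂ) * star ((b q) i0)) = _
      have hterm : ∀ q, W i q * ((‖ψ‖ : ℂ) * star ((b q) i0))
          = (‖ψ‖ : ℂ) * (W i q * (star W) q i0) := by
        intro q
        rw [Matrix.star_apply, hW]
        show (b q) i * ((‖ψ‖ : ℂ) * star ((b q) i0)) = (‖ψ‖ : ℂ) * ((b q) i * star ((b q) i0))
        ring
      rw [Finset.sum_congr rfl fun q _ => hterm q, ← Finset.mul_sum]
      have := congrFun (congrFun hWW i) i0
      rw [Matrix.mul_apply] at this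
      rw [this, Matrix.one_apply]
    rw [h3]
    -- identify with the right-hand side
    show _ = ((WithLp.equiv 2 (Fin N → ℂ)) ((‖ψ‖ : ℂ) • EuclideanSpace.single i0 (1 : ℂ))) i
    show _ = ((‖ψ‖ : ℂ) • EuclideanSpace.single i0 (1 : ℂ)) i
    rw [PiLp.smul_apply, EuclideanSpace.single_apply, smul_eq_mul]
end QGOnb
end QGAux
end

section
/- Let N ≥ 3 and let U ∈ U(N). Then there exist N−1 pairs (V₁, f₁), …, (V_{N−1}, f_{N−1}), with each V_k ∈ U(2) and each f_k an injective group homomorphism from U(2) to U(N), and a matrix W ∈ U(N−1), such that f_{N−1}(V_{N−1}) ⋯ f₁(V₁) · U equals the block matrix [[1, 0],[0, W]] (a 1×1 block equal to 1 in the top-left corner, W in the bottom-right (N−1)×(N−1) block, and zeros elsewhere). Consequently U = f₁(V₁)* ⋯ f_{N−1}(V_{N−1})* · [[1,0],[0,W]]. -/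
open Matrix

section
variable {N : ℕ}

/-- conjugated block embedding matrix -/
noncomputable def isoMat (B : Matrix (Fin N) (Fin 2) ℂ) (V : Matrix (Fin 2) (Fin 2) ℂ) :
    Matrix (Fin N) (Fin N) ℂ := 1 - B * Bᴴ + B * V * Bᴴ

lemma isoMat_mul (B : Matrix (Fin N) (Fin 2) ℂ) (hB : Bᴴ * B = 1)
    (V V' : Matrix (Fin 2) (Fin 2) ℂ) :
    isoMat B V * isoMat B V' = isoMat B (V * V') := by
  unfold isoMat
  have hmid : ∀ (C : Matrix (Fin N) (Fin 2) ℂ) (D : Matrix (Fin 2) (Fin N) ℂ),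
      (C * Bᴴ) * (B * D) = C * D := by
    intro C D
    rw [Matrix.mul_assoc, ← Matrix.mul_assoc Bᴴ, hB, Matrix.one_mul]
  rw [Matrix.mul_assoc B V Bᴴ, Matrix.mul_assoc B V' Bᴴ, Matrix.mul_assoc B (V*V') Bᴴ]
  rw [Matrix.add_mul, Matrix.sub_mul, Matrix.one_mul, Matrix.mul_add, Matrix.mul_add,
    Matrix.mul_sub, Matrix.mul_sub, Matrix.mul_one, Matrix.mul_one,
    hmid B Bᴴ, hmid B (V' * Bᴴ)]
  have h3 : B * (V * Bᴴ) * (B * Bᴴ) = B * (V * Bᴴ) := by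
    rw [← Matrix.mul_assoc B V Bᴴ, hmid (B * V) Bᴴ, Matrix.mul_assoc]
  have h4 : B * (V * Bᴴ) * (B * (V' * Bᴴ)) = B * (V * V' * Bᴴ) := by
    rw [← Matrix.mul_assoc B V Bᴴ, hmid (B * V) (V' * Bᴴ), Matrix.mul_assoc B V,
      ← Matrix.mul_assoc V V' Bᴴ]
  rw [h3, h4]
  abel

lemma isoMat_one (B : Matrix (Fin N) (Fin 2) ℂ) : isoMat B 1 = 1 := by
  unfold isoMat; rw [Matrix.mul_one]; abel

lemma isoMat_conjTranspose (B : Matrix (Fin N) (Fin 2) ℂ) (V : Matrix (Fin 2) (Fin 2) ℂ) :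
    (isoMat B V)ᴴ = isoMat B Vᴴ := by
  unfold isoMat
  simp [conjTranspose_add, conjTranspose_sub, conjTranspose_mul, Matrix.mul_assoc]

lemma isoMat_mem (B : Matrix (Fin N) (Fin 2) ℂ) (hB : Bᴴ * B = 1)
    {V : Matrix (Fin 2) (Fin 2) ℂ} (hV : V ∈ Matrix.unitaryGroup (Fin 2) ℂ) :
    isoMat B V ∈ Matrix.unitaryGroup (Fin N) ℂ := by
  constructor
  · rw [Matrix.star_eq_conjTranspose, isoMat_conjTranspose, isoMat_mul B hB]
    rw [show Vᴴ * V = 1 from by simpa [Matrix.star_eq_conjTranspose] using hV.1]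
    exact isoMat_one B
  · rw [Matrix.star_eq_conjTranspose, isoMat_conjTranspose, isoMat_mul B hB]
    rw [show V * Vᴴ = 1 from by simpa [Matrix.star_eq_conjTranspose] using hV.2]
    exact isoMat_one B

/-- the embedding as a monoid hom between unitary groups -/
noncomputable def isoEmbed (B : Matrix (Fin N) (Fin 2) ℂ) (hB : Bᴴ * B = 1) :
    Matrix.unitaryGroup (Fin 2) ℂ →* Matrix.unitaryGroup (Fin N) ℂ where
  toFun V := ⟨isoMat B V.1, isoMat_mem B hB V.2⟩
  map_one' := Subtype.ext (isoMat_one B)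
  map_mul' V V' := Subtype.ext (isoMat_mul B hB V.1 V'.1).symm

lemma isoEmbed_injective (B : Matrix (Fin N) (Fin 2) ℂ) (hB : Bᴴ * B = 1) :
    Function.Injective (isoEmbed B hB) := by
  intro V V' h
  have h' : isoMat B V.1 = isoMat B V'.1 := congrArg Subtype.val h
  unfold isoMat at h'
  have h2 : B * V.1 * Bᴴ = B * V'.1 * Bᴴ := by
    have := congrArg (fun M => M - (1 - B * Bᴴ)) h'
    simpa using this
  have h3 := congrArg (fun M => Bᴴ * M * B) h2
  apply Subtype.ext
  calc V.1 = Bᴴ * (B * V.1 * Bᴴ) * B := by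
        rw [show B * V.1 * Bᴴ = B * (V.1 * Bᴴ) from Matrix.mul_assoc _ _ _,
          ← Matrix.mul_assoc Bᴴ, hB, Matrix.one_mul, Matrix.mul_assoc, hB, Matrix.mul_one]
    _ = Bᴴ * (B * V'.1 * Bᴴ) * B := by rw [h2]
    _ = V'.1 := by
        rw [show B * V'.1 * Bᴴ = B * (V'.1 * Bᴴ) from Matrix.mul_assoc _ _ _,
          ← Matrix.mul_assoc Bᴴ, hB, Matrix.one_mul, Matrix.mul_assoc, hB, Matrix.mul_one]

lemma isoMat_mul_isometry (B : Matrix (Fin N) (Fin 2) ℂ) (hB : Bᴴ * B = 1)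
    (V : Matrix (Fin 2) (Fin 2) ℂ) : isoMat B V * B = B * V := by
  unfold isoMat
  rw [Matrix.add_mul, Matrix.sub_mul, Matrix.one_mul, Matrix.mul_assoc B Bᴴ B, hB,
    Matrix.mul_one, Matrix.mul_assoc, hB, Matrix.mul_one]
  abel

end

-- list product lemmas
lemma list_prod_single {G : Type*} [Monoid G] {m : ℕ} (g : Fin (m+1) → G)
    (hg : ∀ k, k ≠ 0 → g k = 1) : (List.ofFn g).prod = g 0 ∧ (List.ofFn g).reverse.prod = g 0 := by
  have htail : List.ofFn (fun i : Fin m => g i.succ) = List.replicate m 1 := by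
    have : (fun i : Fin m => g i.succ) = fun _ => 1 := funext fun k => hg _ (Fin.succ_ne_zero k)
    rw [this, List.ofFn_const]
  rw [List.ofFn_succ, htail]
  constructor
  · simp
  · simp [List.reverse_cons, List.prod_append]


/-- The block matrix `[[1, 0], [0, W]] ∈ M_N(ℂ)` for `W ∈ M_{N-1}(ℂ)`. -/
def downBlock (N : ℕ) (W : Matrix (Fin (N - 1)) (Fin (N - 1)) ℂ) :
    Matrix (Fin N) (Fin N) ℂ :=
  Matrix.of fun i j =>
    if hi : i.val = 0 then (if j.val = 0 then 1 else 0)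
    else if hj : j.val = 0 then 0
    else W ⟨i.val - 1, by have := i.isLt; omega⟩ ⟨j.val - 1, by have := j.isLt; omega⟩

/-- **Block reduction of a unitary matrix by elementary quantum gates.**
For `N ≥ 3` and `U ∈ U(N)` there are `N-1` elementary quantum gates `f_k(V_k)` and a
unitary `W ∈ U(N-1)` with `f_{N-1}(V_{N-1}) ⋯ f_1(V_1) · U = [[1,0],[0,W]]`, and hence
`U = f_1(V_1)* ⋯ f_{N-1}(V_{N-1})* · [[1,0],[0,W]]`. -/
theorem unitary_block_reduction (N : ℕ) (hN : 3 ≤ N)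
    (U : Matrix.unitaryGroup (Fin N) ℂ) :
    ∃ (V : Fin (N - 1) → Matrix.unitaryGroup (Fin 2) ℂ)
      (f : Fin (N - 1) →
        (Matrix.unitaryGroup (Fin 2) ℂ →* Matrix.unitaryGroup (Fin N) ℂ))
      (W : Matrix.unitaryGroup (Fin (N - 1)) ℂ),
      (∀ k, Function.Injective (f k)) ∧
      (((((List.ofFn fun k => (f k) (V k)).reverse).prod :
            Matrix.unitaryGroup (Fin N) ℂ) : Matrix (Fin N) (Fin N) ℂ) *
          (U : Matrix (Fin N) (Fin N) ℂ)
        = downBlock N (W : Matrix (Fin (N - 1)) (Fin (N - 1)) ℂ)) ∧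
      ((U : Matrix (Fin N) (Fin N) ℂ)
        = (List.ofFn fun k =>
            (((f k) (V k) : Matrix (Fin N) (Fin N) ℂ))ᴴ).prod *
          downBlock N (W : Matrix (Fin (N - 1)) (Fin (N - 1)) ℂ)) := by
  classical
  obtain ⟨n, rfl⟩ : ∃ n, N = n + 3 := ⟨N - 3, by omega⟩
  set Um : Matrix (Fin (n+3)) (Fin (n+3)) ℂ := (U : Matrix (Fin (n+3)) (Fin (n+3)) ℂ) with hUm
  have hUunit : Umᴴ * Um = 1 := by
    simpa [Matrix.star_eq_conjTranspose] using U.2.1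
  set x : Fin (n+3) → ℂ := fun j => Um j 0 with hxdef
  have hxsum : ∑ j, (Complex.normSq (x j) : ℂ) = 1 := by
    have h := congrFun (congrFun hUunit 0) 0
    simp only [Matrix.mul_apply, Matrix.conjTranspose_apply, Matrix.one_apply_eq] at h
    calc ∑ j, (Complex.normSq (x j) : ℂ) = ∑ j, star (Um j 0) * Um j 0 := by
          refine Finset.sum_congr rfl fun j _ => ?_
          rw [Complex.star_def, ← Complex.normSq_eq_conj_mul_self]
      _ = 1 := h
  have hxsumR : ∑ j, Complex.normSq (x j) = 1 := by
    have := hxsum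
    push_cast at this
    exact_mod_cast this
  set a : ℂ := x 0 with hadef
  set t : ℝ := 1 - Complex.normSq a with htdef
  have htsum : ∑ j : Fin (n+2), Complex.normSq (x j.succ) = t := by
    rw [Fin.sum_univ_succ] at hxsumR
    rw [htdef, hadef]; linarith
  have ht0 : 0 ≤ t := by
    rw [← htsum]
    exact Finset.sum_nonneg fun j _ => Complex.normSq_nonneg _
  set r : ℝ := Real.sqrt t with hrdef
  have hr2 : r * r = t := Real.mul_self_sqrt ht0
  have hkeyR : Complex.normSq a + r * r = 1 := by rw [hr2, htdef]; ring
  have hkey : (starRingEnd ℂ) a * a + (r : ℂ) * (r : ℂ) = 1 := by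
    rw [← Complex.normSq_eq_conj_mul_self]
    exact_mod_cast hkeyR
  -- when r = 0, tail of x vanishes
  have hxtail : r = 0 → ∀ j : Fin (n+2), x j.succ = 0 := by
    intro hr j
    have ht : t = 0 := by rw [← hr2, hr, mul_zero]
    have hall : ∀ j ∈ Finset.univ, Complex.normSq (x (Fin.succ j)) = 0 := by
      rw [← Finset.sum_eq_zero_iff_of_nonneg (fun j _ => Complex.normSq_nonneg (x (Fin.succ j)))]
      rw [htsum]; exact ht
    exact Complex.normSq_eq_zero.mp (hall j (Finset.mem_univ _))
  set u : Fin (n+3) → ℂ := fun i =>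
    if r = 0 then (if i.val = 1 then 1 else 0)
    else (r : ℂ)⁻¹ * (if i = 0 then 0 else x i) with hudef
  have hu0 : u 0 = 0 := by
    rw [hudef]
    split_ifs with h1
    · simp
    · simp
  set B : Matrix (Fin (n+3)) (Fin 2) ℂ :=
    Matrix.of (fun i k => if k = 0 then (if i = 0 then 1 else 0) else u i) with hBdef
  have hB0 : ∀ i, B i 0 = if i = 0 then 1 else 0 := by intro i; simp [hBdef]
  have hB1 : ∀ i, B i 1 = u i := by intro i; simp [hBdef]
  have he1 : ∑ i : Fin (n+3), star (B i 0) * B i 0 = 1 := by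
    have hterm : ∀ i : Fin (n+3), star (B i 0) * B i 0 = if i = 0 then 1 else 0 := by
      intro i
      rw [hB0]
      by_cases hi : i = 0 <;> simp [hi]
    rw [Finset.sum_congr rfl fun i _ => hterm i, Finset.sum_ite_eq' Finset.univ]
    simp
  have heu : ∑ i : Fin (n+3), star (B i 0) * B i 1 = 0 := by
    have hterm : ∀ i : Fin (n+3), star (B i 0) * B i 1 = if i = 0 then u i else 0 := by
      intro i
      rw [hB0, hB1]
      by_cases hi : i = 0 <;> simp [hi]
    rw [Finset.sum_congr rfl fun i _ => hterm i, Finset.sum_ite_eq' Finset.univ]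
    simp [hu0]
  have hue : ∑ i : Fin (n+3), star (B i 1) * B i 0 = 0 := by
    have hterm : ∀ i : Fin (n+3), star (B i 1) * B i 0 = if i = 0 then star (u i) else 0 := by
      intro i
      rw [hB0, hB1]
      by_cases hi : i = 0 <;> simp [hi]
    rw [Finset.sum_congr rfl fun i _ => hterm i, Finset.sum_ite_eq' Finset.univ]
    simp [hu0]
  have huu : ∑ i : Fin (n+3), star (B i 1) * B i 1 = 1 := by
    have hrw : ∀ i : Fin (n+3), star (B i 1) * B i 1 = star (u i) * u i := by
      intro i; rw [hB1]
    rw [Finset.sum_congr rfl fun i _ => hrw i]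
    by_cases hr : r = 0
    · have hterm : ∀ i : Fin (n+3), star (u i) * u i
          = if i = (⟨1, by omega⟩ : Fin (n+3)) then 1 else 0 := by
        intro i
        rw [hudef]
        simp only [if_pos hr]
        by_cases h : i.val = 1
        · rw [if_pos h, if_pos (Fin.ext h)]; simp
        · rw [if_neg h, if_neg (fun hh => h (by rw [hh]))]; simp
      rw [Finset.sum_congr rfl fun i _ => hterm i, Finset.sum_ite_eq' Finset.univ]
      simp
    · have hstep : ∀ i : Fin (n+3), star (u i) * u i
          = ((r:ℂ) * (r:ℂ))⁻¹ * (star (if i = 0 then 0 else x i) * (if i = 0 then 0 else x i)) := by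
        intro i
        rw [hudef]
        simp only [if_neg hr]
        rw [star_mul']
        have hsr : star ((r:ℂ)⁻¹) = (r:ℂ)⁻¹ := by
          rw [← Complex.ofReal_inv]; exact Complex.conj_ofReal _
        rw [hsr, mul_inv]
        ring
      rw [Finset.sum_congr rfl fun i _ => hstep i, ← Finset.mul_sum]
      have hsum2 : ∑ i : Fin (n+3),
          (star (if i = 0 then 0 else x i) * (if i = 0 then 0 else x i)) = (t : ℂ) := by
        rw [Fin.sum_univ_succ]
        have h00 : star (if (0 : Fin (n+3)) = 0 then (0:ℂ) else x 0) *
            (if (0 : Fin (n+3)) = 0 then (0:ℂ) else x 0) = 0 := by simp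
        rw [h00, zero_add]
        have hss : ∀ j : Fin (n+2), (if j.succ = 0 then (0:ℂ) else x j.succ) = x j.succ := by
          intro j; rw [if_neg (Fin.succ_ne_zero j)]
        calc ∑ j : Fin (n+2), star (if j.succ = 0 then (0:ℂ) else x j.succ) *
                (if j.succ = 0 then (0:ℂ) else x j.succ)
            = ∑ j : Fin (n+2), star (x j.succ) * x j.succ := by
              refine Finset.sum_congr rfl fun j _ => ?_
              rw [hss]
          _ = ∑ j : Fin (n+2), (Complex.normSq (x j.succ) : ℂ) := by
              refine Finset.sum_congr rfl fun j _ => ?_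
              rw [Complex.star_def, ← Complex.normSq_eq_conj_mul_self]
          _ = (t : ℂ) := by rw [← htsum]; push_cast; rfl
      rw [hsum2]
      have hrC : (r : ℂ) * (r : ℂ) = (t : ℂ) := by exact_mod_cast hr2
      rw [hrC, inv_mul_cancel₀]
      have : t ≠ 0 := fun h => hr (by rw [hrdef, h, Real.sqrt_zero])
      exact_mod_cast this
  have hBB : Bᴴ * B = 1 := by
    ext k l
    rw [Matrix.mul_apply]
    have hterm : ∀ i, Bᴴ k i * B i l = star (B i k) * B i l := by
      intro i; rw [Matrix.conjTranspose_apply]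
    rw [Finset.sum_congr rfl fun i _ => hterm i]
    fin_cases k <;> fin_cases l
    · simpa [Matrix.one_apply] using he1
    · simpa [Matrix.one_apply] using heu
    · simpa [Matrix.one_apply] using hue
    · simpa [Matrix.one_apply] using huu
  set c : Fin 2 → ℂ := ![a, (r : ℂ)] with hcdef
  have hxc : x = B *ᵥ c := by
    funext i
    rw [Matrix.mulVec, dotProduct, Fin.sum_univ_two]
    have hc0 : c 0 = a := rfl
    have hc1 : c 1 = (r : ℂ) := rfl
    rw [hc0, hc1, hB0, hB1]
    by_cases hr : r = 0
    · rw [hr]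
      simp only [Complex.ofReal_zero, mul_zero, add_zero]
      by_cases hi : i = 0
      · rw [if_pos hi, one_mul, hi, hadef]
      · rw [if_neg hi, zero_mul]
        obtain ⟨j, rfl⟩ : ∃ j : Fin (n+2), j.succ = i := by
          rcases Fin.eq_succ_of_ne_zero hi with ⟨j, rfl⟩; exact ⟨j, rfl⟩
        exact hxtail hr j
    · rw [hudef]
      simp only [if_neg hr]
      by_cases hi : i = 0
      · rw [if_pos hi, if_pos hi, one_mul, mul_zero, zero_mul, add_zero, hi, hadef]
      · rw [if_neg hi, if_neg hi, zero_mul, zero_add]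
        rw [mul_comm ((r:ℂ)⁻¹) (x i), mul_assoc, inv_mul_cancel₀, mul_one]
        exact_mod_cast hr
  set V0 : Matrix (Fin 2) (Fin 2) ℂ := !![starRingEnd ℂ a, (r:ℂ); -(r:ℂ), a] with hV0def
  have hsr : (starRingEnd ℂ) ((r:ℂ)) = (r:ℂ) := Complex.conj_ofReal _
  have hV0mem : V0 ∈ Matrix.unitaryGroup (Fin 2) ℂ := by
    rw [Matrix.mem_unitaryGroup_iff']
    ext i j
    rw [Matrix.star_eq_conjTranspose, Matrix.mul_apply, Fin.sum_univ_two,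
      Matrix.conjTranspose_apply, Matrix.conjTranspose_apply]
    fin_cases i <;> fin_cases j <;>
      simp only [hV0def, Fin.mk_zero, Fin.mk_one, Matrix.cons_val', Matrix.cons_val_zero,
        Matrix.cons_val_one, Matrix.head_cons, Matrix.head_fin_const, Matrix.empty_val',
        Matrix.cons_val_fin_one, Matrix.of_apply, Matrix.one_apply, if_true,
        show ((0:Fin 2) = 1) = False from by simp, show ((1:Fin 2) = 0) = False from by simp,
        if_false, Complex.star_def, map_neg, Complex.conj_conj, hsr]
    · linear_combination hkey
    · ring
    · ring
    · linear_combination hkey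
  have hVc : V0 *ᵥ c = ![1, 0] := by
    funext i
    rw [Matrix.mulVec, dotProduct, Fin.sum_univ_two]
    have hc0 : c 0 = a := rfl
    have hc1 : c 1 = (r : ℂ) := rfl
    rw [hc0, hc1]
    fin_cases i <;>
      simp only [hV0def, Fin.mk_zero, Fin.mk_one, Matrix.cons_val', Matrix.cons_val_zero,
        Matrix.cons_val_one, Matrix.head_cons, Matrix.head_fin_const, Matrix.empty_val',
        Matrix.cons_val_fin_one, Matrix.of_apply]
    · exact hkey
    · ring
  set Q : Matrix (Fin (n+3)) (Fin (n+3)) ℂ := isoMat B V0 with hQdef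
  have hQmem : Q ∈ Matrix.unitaryGroup (Fin (n+3)) ℂ := isoMat_mem B hBB hV0mem
  set M : Matrix (Fin (n+3)) (Fin (n+3)) ℂ := Q * Um with hMdef
  have hMmem : M ∈ Matrix.unitaryGroup (Fin (n+3)) ℂ := mul_mem hQmem U.2
  have hcol : ∀ i, M i 0 = if i = 0 then 1 else 0 := by
    have hQx : Q *ᵥ x = fun i => if i = 0 then 1 else 0 := by
      rw [hxc, Matrix.mulVec_mulVec, isoMat_mul_isometry B hBB, ← Matrix.mulVec_mulVec, hVc]
      funext i
      rw [Matrix.mulVec, dotProduct, Fin.sum_univ_two]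
      simp [hBdef]
    intro i
    have : M i 0 = (Q *ᵥ x) i := by
      rw [hMdef, Matrix.mul_apply, Matrix.mulVec, dotProduct]
    rw [this, hQx]
  have hM1 : Mᴴ * M = 1 := by
    simpa [Matrix.star_eq_conjTranspose] using hMmem.1
  have hrow : ∀ j, M 0 j = if j = 0 then 1 else 0 := by
    intro j
    have h := congrFun (congrFun hM1 0) j
    rw [Matrix.mul_apply] at h
    have hterm : ∀ i : Fin (n+3), (Mᴴ) 0 i * M i j = if i = 0 then M 0 j else 0 := by
      intro i
      rw [Matrix.conjTranspose_apply, hcol i]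
      by_cases hi : i = 0
      · rw [if_pos hi, if_pos hi, star_one, one_mul, hi]
      · rw [if_neg hi, if_neg hi, star_zero, zero_mul]
    rw [Finset.sum_congr rfl (fun i _ => hterm i), Finset.sum_ite_eq' Finset.univ] at h
    simp only [Finset.mem_univ, if_true] at h
    rw [h, Matrix.one_apply]
    by_cases hj : j = 0
    · rw [if_pos hj, if_pos hj.symm]
    · rw [if_neg hj, if_neg (fun hh => hj hh.symm)]
  set W : Matrix (Fin (n+2)) (Fin (n+2)) ℂ :=
    Matrix.of (fun i j : Fin (n+2) => M i.succ j.succ) with hWdef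
  have hWmem : W ∈ Matrix.unitaryGroup (Fin (n+2)) ℂ := by
    rw [Matrix.mem_unitaryGroup_iff']
    ext i j
    rw [Matrix.star_eq_conjTranspose, Matrix.mul_apply]
    have h := congrFun (congrFun hM1 i.succ) j.succ
    rw [Matrix.mul_apply, Fin.sum_univ_succ] at h
    have hhead : (Mᴴ) i.succ 0 * M 0 j.succ = 0 := by
      rw [Matrix.conjTranspose_apply, hrow, if_neg (Fin.succ_ne_zero i), star_zero, zero_mul]
    rw [hhead, zero_add] at h
    calc ∑ k : Fin (n+2), (Wᴴ) i k * W k j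
        = ∑ k : Fin (n+2), (Mᴴ) i.succ k.succ * M k.succ j.succ := by
          refine Finset.sum_congr rfl fun k _ => ?_
          simp only [Matrix.conjTranspose_apply, hWdef, Matrix.of_apply]
      _ = (1 : Matrix (Fin (n+3)) (Fin (n+3)) ℂ) i.succ j.succ := h
      _ = (1 : Matrix (Fin (n+2)) (Fin (n+2)) ℂ) i j := by
          rw [Matrix.one_apply, Matrix.one_apply]
          by_cases hij : i = j
          · rw [if_pos hij, if_pos (by rw [hij])]
          · rw [if_neg hij, if_neg (fun hh => hij (Fin.succ_injective _ hh))]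
  have hMdown : M = downBlock (n+3) W := by
    ext i j
    rw [downBlock, Matrix.of_apply]
    by_cases hi : (i : ℕ) = 0
    · rw [dif_pos hi]
      have hi0 : i = 0 := Fin.ext hi
      rw [hi0, hrow j]
      by_cases hj : j = 0
      · rw [if_pos hj, if_pos (show (j:ℕ) = 0 by rw [hj]; rfl)]
      · rw [if_neg hj, if_neg (show ¬(j:ℕ) = 0 from fun hh => hj (Fin.ext hh))]
    · rw [dif_neg hi]
      by_cases hj : (j : ℕ) = 0
      · rw [dif_pos hj]
        have hj0 : j = 0 := Fin.ext hj
        rw [hj0, hcol i, if_neg (show ¬ i = 0 from fun hh => hi (by rw [hh]; rfl))]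
      · rw [dif_neg hj, hWdef, Matrix.of_apply]
        have e1 : i = Fin.succ (⟨(i:ℕ)-1, by have := i.isLt; omega⟩ : Fin (n+2)) :=
          Fin.ext (by simp [Fin.val_succ]; omega)
        have e2 : j = Fin.succ (⟨(j:ℕ)-1, by have := j.isLt; omega⟩ : Fin (n+2)) :=
          Fin.ext (by simp [Fin.val_succ]; omega)
        rw [← e1, ← e2]
  set Vfun : Fin (n+2) → Matrix.unitaryGroup (Fin 2) ℂ :=
    fun k => if k = 0 then ⟨V0, hV0mem⟩ else 1 with hVfun
  set ffun : Fin (n+2) → (Matrix.unitaryGroup (Fin 2) ℂ →* Matrix.unitaryGroup (Fin (n+3)) ℂ) :=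
    fun _ => isoEmbed B hBB with hffun
  have hones : ∀ k : Fin (n+2), k ≠ 0 → ffun k (Vfun k) = 1 := by
    intro k hk
    rw [hVfun]
    simp only [if_neg hk]
    exact map_one _
  refine ⟨Vfun, ffun, ⟨W, hWmem⟩, fun k => isoEmbed_injective B hBB, ?_, ?_⟩
  · have hL := (list_prod_single (fun k : Fin (n+2) => ffun k (Vfun k)) hones).2
    show ((((List.ofFn fun k : Fin (n+2) => (ffun k) (Vfun k)).reverse).prod :
        Matrix.unitaryGroup (Fin (n+3)) ℂ) : Matrix (Fin (n+3)) (Fin (n+3)) ℂ) * Um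
        = downBlock (n+3) W
    rw [hL]
    have : ((ffun 0 (Vfun 0) : Matrix.unitaryGroup (Fin (n+3)) ℂ) :
        Matrix (Fin (n+3)) (Fin (n+3)) ℂ) = Q := by
      rw [hVfun, hffun]
      simp only [if_pos rfl]
      rfl
    rw [this, ← hMdef]
    exact hMdown
  · have hones2 : ∀ k : Fin (n+2), k ≠ 0 →
        ((ffun k (Vfun k) : Matrix (Fin (n+3)) (Fin (n+3)) ℂ))ᴴ = 1 := by
      intro k hk
      rw [hones k hk]
      simp
    have hL2 := (list_prod_single
      (fun k : Fin (n+2) => ((ffun k (Vfun k) : Matrix (Fin (n+3)) (Fin (n+3)) ℂ))ᴴ) hones2).1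
    show Um = (List.ofFn fun k : Fin (n+2) =>
        (((ffun k) (Vfun k) : Matrix (Fin (n+3)) (Fin (n+3)) ℂ))ᴴ).prod * downBlock (n+3) W
    rw [hL2]
    have h0 : ((ffun 0 (Vfun 0) : Matrix.unitaryGroup (Fin (n+3)) ℂ) :
        Matrix (Fin (n+3)) (Fin (n+3)) ℂ) = Q := by
      rw [hVfun, hffun]
      simp only [if_pos rfl]
      rfl
    rw [h0, ← hMdown, hMdef, ← Matrix.mul_assoc]
    have hQQ : Qᴴ * Q = 1 := by
      simpa [Matrix.star_eq_conjTranspose] using hQmem.1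
    rw [hQQ, Matrix.one_mul]
end

section
/- Let n ≥ 1 and let ϱ : ℝ → ℝ be a nonnegative function, integrable on [0,1], with ∫₀¹ ϱ(x) dx = 1. Then there exists a family of angles θ_w ∈ [0, π/2], indexed by binary words w ∈ {0,1}^m for 0 ≤ m ≤ n−1, such that for every k ∈ {0,…,2ⁿ−1} with binary digits z₁,…,z_n (k = Σ_{i=1}^n z_i 2^{i−1}): ∫_{k/2ⁿ}^{(k+1)/2ⁿ} ϱ(x) dx = ∏_{j=1}^{n} T_{z_j}(θ_{(z_{j+1},…,z_n)})², where for j = n the index (z_{n+1},…,z_n) is the empty word. -/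
open MeasureTheory

/-- `T z x = (cos x)^(1-z) (sin x)^z`, i.e. `T false = cos` and `T true = sin`. -/
noncomputable def Tfun : Bool → ℝ → ℝ := fun z x => if z then Real.sin x else Real.cos x

namespace GRaux

/-- Value of a binary word, lowest bit first. -/
def valL : List Bool → ℕ
  | [] => 0
  | b :: w => (if b then 1 else 0) + 2 * valL w

lemma valL_lt : ∀ w : List Bool, valL w < 2 ^ w.length
  | [] => by simp [valL]
  | b :: w => by
      have := valL_lt w
      simp only [valL, List.length_cons, pow_succ]
      split <;> omega

/-- Integral of ϱ over the dyadic interval determined by the word `w`. -/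
noncomputable def G (ϱ : ℝ → ℝ) (w : List Bool) : ℝ :=
  ∫ x in ((valL w : ℝ) / 2 ^ w.length)..(((valL w : ℝ) + 1) / 2 ^ w.length), ϱ x

noncomputable def theta (ϱ : ℝ → ℝ) (w : List Bool) : ℝ :=
  Real.arccos (Real.sqrt (G ϱ (false :: w) / G ϱ w))

lemma mem01 {a : ℝ} (h0 : 0 ≤ a) (h1 : a ≤ 1) : a ∈ Set.uIcc (0:ℝ) 1 := by
  rw [Set.uIcc_of_le zero_le_one]; exact ⟨h0, h1⟩

variable {ϱ : ℝ → ℝ}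

lemma integrable_sub (hint : IntervalIntegrable ϱ volume 0 1)
    {a b : ℝ} (ha0 : 0 ≤ a) (ha1 : a ≤ 1) (hb0 : 0 ≤ b) (hb1 : b ≤ 1) :
    IntervalIntegrable ϱ volume a b :=
  hint.mono_set (Set.uIcc_subset_uIcc (mem01 ha0 ha1) (mem01 hb0 hb1))

lemma endpoint_bounds (w : List Bool) :
    0 ≤ (valL w : ℝ) / 2 ^ w.length ∧ ((valL w : ℝ) + 1) / 2 ^ w.length ≤ 1 := by
  have h := valL_lt w
  have h2 : (0:ℝ) < 2 ^ w.length := by positivity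
  constructor
  · positivity
  · rw [div_le_one h2]
    have : (valL w : ℝ) + 1 ≤ 2 ^ w.length := by exact_mod_cast h
    linarith

lemma endpoint_le (w : List Bool) :
    (valL w : ℝ) / 2 ^ w.length ≤ ((valL w : ℝ) + 1) / 2 ^ w.length := by
  have h2 : (0:ℝ) < 2 ^ w.length := by positivity
  exact (div_le_div_iff_of_pos_right h2).mpr (by linarith)

lemma G_integrable (hint : IntervalIntegrable ϱ volume 0 1) (w : List Bool) :
    IntervalIntegrable ϱ volume ((valL w : ℝ) / 2 ^ w.length)
      (((valL w : ℝ) + 1) / 2 ^ w.length) := by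
  obtain ⟨h0, h1⟩ := endpoint_bounds w
  exact integrable_sub hint h0 ((endpoint_le w).trans h1) (by positivity) h1

lemma G_nonneg (hpos : ∀ x, 0 ≤ ϱ x) (w : List Bool) : 0 ≤ G ϱ w := by
  have h2 : (0:ℝ) < 2 ^ w.length := by positivity
  apply intervalIntegral.integral_nonneg (endpoint_le w)
  intro x _; exact hpos x

lemma G_nil (hnorm : (∫ x in (0:ℝ)..1, ϱ x) = 1) : G ϱ [] = 1 := by
  simp only [G, valL, List.length_nil, pow_zero, Nat.cast_zero]
  norm_num
  exact hnorm

lemma G_split (hint : IntervalIntegrable ϱ volume 0 1) (w : List Bool) :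
    G ϱ w = G ϱ (false :: w) + G ϱ (true :: w) := by
  have hv : valL w < 2 ^ w.length := valL_lt w
  have hvr : ((valL w : ℝ)) + 1 ≤ 2 ^ w.length := by exact_mod_cast hv
  have hv0 : (0:ℝ) ≤ (valL w : ℝ) := Nat.cast_nonneg _
  have h2 : (0:ℝ) < 2 ^ w.length := by positivity
  have hb0 : (0:ℝ) ≤ (2 * (valL w : ℝ) + 1) / 2 ^ (w.length + 1) := by positivity
  have hb1 : (2 * (valL w : ℝ) + 1) / 2 ^ (w.length + 1) ≤ 1 := by
    rw [div_le_one (by positivity), pow_succ]; linarith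
  have ha0 : (0:ℝ) ≤ (valL w : ℝ) / 2 ^ w.length := by positivity
  have hc1 : ((valL w : ℝ) + 1) / 2 ^ w.length ≤ 1 := by rw [div_le_one h2]; linarith
  have ha1 : (valL w : ℝ) / 2 ^ w.length ≤ 1 := by rw [div_le_one h2]; linarith
  have hc0 : (0:ℝ) ≤ ((valL w : ℝ) + 1) / 2 ^ w.length := by positivity
  have i1 := integrable_sub hint ha0 ha1 hb0 hb1
  have i2 := integrable_sub hint hb0 hb1 hc0 hc1
  have key := intervalIntegral.integral_add_adjacent_intervals (f := ϱ) i1 i2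
  have ef : G ϱ (false :: w)
      = ∫ x in ((valL w : ℝ) / 2 ^ w.length)..((2 * (valL w : ℝ) + 1) / 2 ^ (w.length + 1)), ϱ x := by
    have e1 : ((valL (false :: w) : ℕ) : ℝ) / 2 ^ (false :: w).length
        = (valL w : ℝ) / 2 ^ w.length := by
      simp only [valL, List.length_cons]
      push_cast
      rw [pow_succ]
      field_simp
      ring
    have e2 : (((valL (false :: w) : ℕ) : ℝ) + 1) / 2 ^ (false :: w).length
        = (2 * (valL w : ℝ) + 1) / 2 ^ (w.length + 1) := by
      simp only [valL, List.length_cons]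
      push_cast
      ring_nf
    rw [G, e1, e2]
  have et : G ϱ (true :: w)
      = ∫ x in ((2 * (valL w : ℝ) + 1) / 2 ^ (w.length + 1))..(((valL w : ℝ) + 1) / 2 ^ w.length), ϱ x := by
    have e1 : ((valL (true :: w) : ℕ) : ℝ) / 2 ^ (true :: w).length
        = (2 * (valL w : ℝ) + 1) / 2 ^ (w.length + 1) := by
      simp only [valL, List.length_cons]
      push_cast
      ring_nf
    have e2 : (((valL (true :: w) : ℕ) : ℝ) + 1) / 2 ^ (true :: w).length
        = ((valL w : ℝ) + 1) / 2 ^ w.length := by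
      simp only [valL, List.length_cons]
      push_cast
      rw [pow_succ]
      field_simp
      ring
    rw [G, e1, e2]
  rw [G, ef, et, key]

lemma G_child (hpos : ∀ x, 0 ≤ ϱ x) (hint : IntervalIntegrable ϱ volume 0 1)
    (b : Bool) (w : List Bool) :
    G ϱ (b :: w) = G ϱ w * (Tfun b (theta ϱ w)) ^ 2 := by
  have hsplit := G_split hint w
  have hf := G_nonneg hpos (false :: w)
  have ht := G_nonneg hpos (true :: w)
  by_cases h : G ϱ w = 0
  · have hz : G ϱ (b :: w) = 0 := by cases b <;> (rw [h] at hsplit; linarith)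
    rw [hz, h, zero_mul]
  · have hGpos : 0 < G ϱ w := lt_of_le_of_ne (G_nonneg hpos w) (Ne.symm h)
    have hr0 : 0 ≤ G ϱ (false :: w) / G ϱ w := by positivity
    have hr1 : G ϱ (false :: w) / G ϱ w ≤ 1 := by
      rw [div_le_one hGpos]; linarith
    have hcos : Real.cos (theta ϱ w) = Real.sqrt (G ϱ (false :: w) / G ϱ w) :=
      Real.cos_arccos (by linarith [Real.sqrt_nonneg (G ϱ (false :: w) / G ϱ w)])
        (Real.sqrt_le_one.mpr hr1)
    have hcos2 : Real.cos (theta ϱ w) ^ 2 = G ϱ (false :: w) / G ϱ w := by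
      rw [hcos, Real.sq_sqrt hr0]
    have hsin2 : Real.sin (theta ϱ w) ^ 2 = G ϱ (true :: w) / G ϱ w := by
      have hpy := Real.sin_sq_add_cos_sq (theta ϱ w)
      rw [hcos2] at hpy
      field_simp at hpy ⊢
      linarith
    cases b
    · simp only [Tfun, Bool.false_eq_true, if_false]
      rw [hcos2, mul_div_cancel₀ _ h]
    · simp only [Tfun, if_true]
      rw [hsin2, mul_div_cancel₀ _ h]

lemma valL_map (k j : ℕ) :
    ∀ m, valL ((List.range m).map fun i => k.testBit (j + i)) = k / 2 ^ j % 2 ^ m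
  | 0 => by simp [valL, Nat.mod_one]
  | m + 1 => by
    rw [List.range_succ_eq_map, List.map_cons, List.map_map]
    have hfc : ((fun i => k.testBit (j + i)) ∘ Nat.succ) = fun i => k.testBit (j + 1 + i) := by
      funext i; simp only [Function.comp_apply]; congr 1; omega
    rw [hfc]
    simp only [valL, Nat.add_zero, valL_map k (j + 1) m]
    have hb : k.testBit j = decide (k / 2 ^ j % 2 = 1) := Nat.testBit_eq_decide_div_mod_eq
    have hd : k / 2 ^ (j + 1) = k / 2 ^ j / 2 := by
      rw [pow_succ, Nat.div_div_eq_div_mul]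
    have hm : k / 2 ^ j % 2 ^ (m + 1) = k / 2 ^ j % 2 + 2 * (k / 2 ^ j / 2 % 2 ^ m) := by
      rw [pow_succ, mul_comm, Nat.mod_mul]
    simp only [hb, hd, hm]
    rcases Nat.mod_two_eq_zero_or_one (k / 2 ^ j) with h | h <;> simp [h]

end GRaux

/-- **Trigonometric decomposition of the target integrals (Grover–Rudolph).**
For a nonnegative `ϱ` integrable on `[0,1]` with `∫₀¹ ϱ = 1` there are angles
`θ_w ∈ [0, π/2]`, indexed by binary words `w` of length `≤ n-1`, such that for all
`k < 2ⁿ` with binary digits `z₁,…,z_n`,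
`∫_{k/2ⁿ}^{(k+1)/2ⁿ} ϱ = ∏_{j=1}^n T_{z_j}(θ_{(z_{j+1},…,z_n)})²`. -/
theorem grover_rudolph_trig_decomposition (n : ℕ) (hn : 1 ≤ n)
    (ϱ : ℝ → ℝ) (hpos : ∀ x, 0 ≤ ϱ x)
    (hint : IntervalIntegrable ϱ volume 0 1)
    (hnorm : (∫ x in (0:ℝ)..1, ϱ x) = 1) :
    ∃ θ : List Bool → ℝ,
      (∀ w : List Bool, w.length ≤ n - 1 → θ w ∈ Set.Icc 0 (Real.pi / 2)) ∧
      ∀ k : ℕ, k < 2 ^ n →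
        (∫ x in ((k : ℝ) / 2 ^ n)..(((k : ℝ) + 1) / 2 ^ n), ϱ x)
          = ∏ j ∈ Finset.range n,
              (Tfun (k.testBit j)
                (θ ((List.range (n - 1 - j)).map fun i => k.testBit (j + 1 + i)))) ^ 2 := by
  refine ⟨GRaux.theta ϱ, fun w _ => ⟨Real.arccos_nonneg _,
    Real.arccos_le_pi_div_two.mpr (Real.sqrt_nonneg _)⟩, fun k hk => ?_⟩
  -- key downward recursion
  have key : ∀ d j : ℕ, j + d = n →
      GRaux.G ϱ ((List.range d).map fun i => k.testBit (j + i))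
        = ∏ i ∈ Finset.Ico j n,
            (Tfun (k.testBit i)
              (GRaux.theta ϱ ((List.range (n - 1 - i)).map fun i' => k.testBit (i + 1 + i')))) ^ 2 := by
    intro d
    induction d with
    | zero =>
        intro j hj
        simp only [List.range_zero, List.map_nil]
        rw [GRaux.G_nil hnorm, show j = n from by omega, Finset.Ico_self, Finset.prod_empty]
    | succ d ih =>
        intro j hj
        have hlist : ((List.range (d + 1)).map fun i => k.testBit (j + i))
            = k.testBit j :: ((List.range d).map fun i => k.testBit (j + 1 + i)) := by
          rw [List.range_succ_eq_map, List.map_cons, List.map_map]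
          have hfc : ((fun i => k.testBit (j + i)) ∘ Nat.succ)
              = fun i => k.testBit (j + 1 + i) := by
            funext i; simp only [Function.comp_apply]; congr 1; omega
          rw [hfc, Nat.add_zero]
        have hd : n - 1 - j = d := by omega
        rw [hlist, GRaux.G_child hpos hint, ih (j + 1) (by omega),
          Finset.prod_eq_prod_Ico_succ_bot (by omega : j < n), hd, mul_comm]
  have h0 := key n 0 (by omega)
  have hval : GRaux.valL ((List.range n).map fun i => k.testBit (0 + i)) = k := by
    rw [GRaux.valL_map k 0 n, pow_zero, Nat.div_one, Nat.mod_eq_of_lt hk]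
  have hlen : ((List.range n).map fun i => k.testBit (0 + i)).length = n := by
    simp
  rw [GRaux.G, hval, hlen] at h0
  rw [Finset.range_eq_Ico]
  exact h0
end

section
/- Let n ≥ 1, set N = 2ⁿ, and let ϱ : ℝ → ℝ be a nonnegative function, integrable on [0,1], with ∫₀¹ ϱ(x) dx = 1. Then there exists a unitary matrix U ∈ U(N) which is a product of N−1 elementary quantum gates (i.e. U = W_{N−1} ⋯ W₁ where each W_k = f_k(V_k) for some V_k ∈ U(2) and some injective group homomorphism f_k : U(2) → U(N)) such that, writing e₀ for the first standard basis vector of ℂ^N, for every k ∈ {0,…,N−1} the squared modulus of the k-th coordinate of U·e₀ (where the k-th standard basis vector corresponds to the binary word of k) equals ∫_{k/2ⁿ}^{(k+1)/2ⁿ} ϱ(x) dx. In other words, measuring the n-qubit register prepared by U in the computational basis yields outcome k with probability ∫_{k/2ⁿ}^{(k+1)/2ⁿ} ϱ(x) dx. -/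
open Matrix MeasureTheory

set_option linter.unusedSectionVars false

section TwoGate

variable {ι : Type*} [Fintype ι] [DecidableEq ι]

def splitPair (a b : ι) (hab : a ≠ b) : (Fin 2 ⊕ {x : ι // x ≠ a ∧ x ≠ b}) ≃ ι where
  toFun := Sum.elim (fun i => if i = 0 then a else b) Subtype.val
  invFun x := if h : x = a then .inl 0 else if h' : x = b then .inl 1 else .inr ⟨x, h, h'⟩
  left_inv := by
    rintro (i | ⟨x, hx, hx'⟩)
    · fin_cases i <;> simp [hab, Ne.symm hab]
    · simp [hx, hx']
  right_inv x := by
    by_cases h : x = a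
    · simp [h]
    · by_cases h' : x = b <;> simp [h, h', Ne.symm hab]

@[simp] lemma splitPair_inl0 (a b : ι) (hab : a ≠ b) : splitPair a b hab (.inl 0) = a := rfl
@[simp] lemma splitPair_inl1 (a b : ι) (hab : a ≠ b) : splitPair a b hab (.inl 1) = b := rfl
@[simp] lemma splitPair_inr (a b : ι) (hab : a ≠ b) (x) : splitPair a b hab (.inr x) = x.1 := rfl

noncomputable def gmat (a b : ι) (hab : a ≠ b) (V : Matrix (Fin 2) (Fin 2) ℂ) : Matrix ι ι ℂ :=
  Matrix.reindex (splitPair a b hab) (splitPair a b hab) (Matrix.fromBlocks V 0 0 1)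

lemma gmat_mul (a b : ι) (hab : a ≠ b) (V W : Matrix (Fin 2) (Fin 2) ℂ) :
    gmat a b hab V * gmat a b hab W = gmat a b hab (V * W) := by
  simp only [gmat, reindex_apply, submatrix_mul_equiv, fromBlocks_multiply]
  simp

lemma gmat_one (a b : ι) (hab : a ≠ b) : gmat a b hab 1 = 1 := by
  simp [gmat, fromBlocks_one]

lemma gmat_star (a b : ι) (hab : a ≠ b) (V : Matrix (Fin 2) (Fin 2) ℂ) :
    star (gmat a b hab V) = gmat a b hab (star V) := by
  simp only [gmat, star_eq_conjTranspose, reindex_apply, conjTranspose_submatrix,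
    fromBlocks_conjTranspose]
  simp

lemma gmat_inj (a b : ι) (hab : a ≠ b) : Function.Injective (gmat a b hab) := by
  intro V W h
  have := congrArg (fun M => (Matrix.reindex (splitPair a b hab) (splitPair a b hab)).symm M) h
  simp only [Equiv.symm_apply_apply, gmat] at this
  have := congrArg Matrix.toBlocks₁₁ this
  simpa [Matrix.toBlocks_fromBlocks₁₁] using this

lemma gmat_mulVec (a b : ι) (hab : a ≠ b) (V : Matrix (Fin 2) (Fin 2) ℂ) (v : ι → ℂ) (x : ι) :
    (gmat a b hab V).mulVec v x =
      if x = a then V 0 0 * v a + V 0 1 * v b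
      else if x = b then V 1 0 * v a + V 1 1 * v b
      else v x := by
  have : gmat a b hab V *ᵥ v =
      ((Matrix.fromBlocks V 0 0 1) *ᵥ (v ∘ (splitPair a b hab))) ∘ (splitPair a b hab).symm := by
    simpa [gmat, reindex_apply] using
      Matrix.submatrix_mulVec_equiv (Matrix.fromBlocks V (0 : Matrix (Fin 2) _ ℂ) 0 1) v
        (splitPair a b hab).symm (splitPair a b hab).symm
  rw [this]
  simp only [Function.comp_apply]
  show ((Matrix.fromBlocks V 0 0 1) *ᵥ (v ∘ (splitPair a b hab))) ((splitPair a b hab).symm x) = _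
  have hfb : ∀ s : Fin 2 ⊕ {x : ι // x ≠ a ∧ x ≠ b},
      ((Matrix.fromBlocks V 0 0 1) *ᵥ (v ∘ (splitPair a b hab))) s =
      Sum.elim (fun i : Fin 2 => V i 0 * v a + V i 1 * v b)
        (fun y : {x : ι // x ≠ a ∧ x ≠ b} => v y.1) s := by
    intro s
    rw [Matrix.fromBlocks_mulVec]
    cases s with
    | inl i =>
      simp [Matrix.mulVec, dotProduct, Fin.sum_univ_two]
      fin_cases i <;> simp
    | inr y =>
      simp [Matrix.mulVec, dotProduct]
  rw [hfb]
  show Sum.elim _ _ ((splitPair a b hab).invFun x) = _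
  simp only [splitPair]
  by_cases h : x = a
  · simp [h]
  · by_cases h' : x = b <;> simp [h, h', Ne.symm hab]

noncomputable def twoGateHom (a b : ι) (hab : a ≠ b) :
    Matrix.unitaryGroup (Fin 2) ℂ →* Matrix.unitaryGroup ι ℂ where
  toFun V := ⟨gmat a b hab V.1, by
    constructor
    · rw [gmat_star, gmat_mul, (Matrix.mem_unitaryGroup_iff'.mp V.2 : _), gmat_one]
    · rw [gmat_star, gmat_mul, (Matrix.mem_unitaryGroup_iff.mp V.2 : _), gmat_one]⟩
  map_one' := Subtype.ext (gmat_one a b hab)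
  map_mul' V W := Subtype.ext ((gmat_mul a b hab V.1 W.1).symm)

lemma twoGateHom_inj (a b : ι) (hab : a ≠ b) : Function.Injective (twoGateHom a b hab) := by
  intro V W h
  exact Subtype.ext (gmat_inj a b hab (congrArg Subtype.val h))

end TwoGate

noncomputable def rotMat (c s : ℝ) : Matrix (Fin 2) (Fin 2) ℂ :=
  !![(c : ℂ), -(s : ℂ); (s : ℂ), (c : ℂ)]

lemma rotMat_mem (c s : ℝ) (h : c ^ 2 + s ^ 2 = 1) :
    rotMat c s ∈ Matrix.unitaryGroup (Fin 2) ℂ := by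
  rw [Matrix.mem_unitaryGroup_iff]
  ext i j
  have h' : (c : ℂ) ^ 2 + (s : ℂ) ^ 2 = 1 := by
    have := congrArg (fun x : ℝ => (x : ℂ)) h
    push_cast at this
    simpa using this
  fin_cases i <;> fin_cases j <;>
    simp [rotMat, Matrix.mul_apply, Fin.sum_univ_two, Matrix.star_apply,
      Matrix.one_apply] <;> ring_nf <;>
    linear_combination h'

section Analysis

variable (n : ℕ) (ϱ : ℝ → ℝ)

noncomputable def Ik (k : ℕ) : ℝ := ∫ x in ((k : ℝ) / 2 ^ n)..(((k : ℝ) + 1) / 2 ^ n), ϱ x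

noncomputable def Tt (m : ℕ) : ℝ := ∫ x in ((m : ℝ) / 2 ^ n)..1, ϱ x

noncomputable def psi (k : ℕ) : ℝ := Real.sqrt (Ik n ϱ k)
noncomputable def tl (m : ℕ) : ℝ := Real.sqrt (Tt n ϱ m)
noncomputable def cc (m : ℕ) : ℝ := if tl n ϱ m = 0 then 1 else psi n ϱ m / tl n ϱ m
noncomputable def ss (m : ℕ) : ℝ := if tl n ϱ m = 0 then 0 else tl n ϱ (m + 1) / tl n ϱ m

variable {n ϱ}

lemma subint (hint : IntervalIntegrable ϱ volume 0 1) {a b : ℝ}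
    (h0 : 0 ≤ a) (h1 : a ≤ 1) (h0' : 0 ≤ b) (h1' : b ≤ 1) :
    IntervalIntegrable ϱ volume a b := by
  refine hint.mono_set ?_
  refine Set.uIcc_subset_uIcc ?_ ?_ <;> rw [Set.uIcc_of_le (by norm_num : (0:ℝ) ≤ 1)] <;>
    exact ⟨by assumption, by assumption⟩

lemma Ik_nonneg (hpos : ∀ x, 0 ≤ ϱ x) (k : ℕ) : 0 ≤ Ik n ϱ k := by
  refine intervalIntegral.integral_nonneg ?_ (fun x _ => hpos x)
  gcongr
  linarith

lemma Tt_nonneg (hpos : ∀ x, 0 ≤ ϱ x) {m : ℕ} (hm : (m : ℝ) / 2 ^ n ≤ 1) : 0 ≤ Tt n ϱ m :=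
  intervalIntegral.integral_nonneg hm (fun x _ => hpos x)

lemma div_pow_le_one {m : ℕ} (hm : m ≤ 2 ^ n) : (m : ℝ) / 2 ^ n ≤ 1 := by
  rw [div_le_one (by positivity)]
  exact_mod_cast hm

lemma Tt_split (hint : IntervalIntegrable ϱ volume 0 1) {m : ℕ} (hm : m < 2 ^ n) :
    Tt n ϱ m = Ik n ϱ m + Tt n ϱ (m + 1) := by
  have h1 : (0:ℝ) ≤ (m : ℝ) / 2 ^ n := by positivity
  have h2 : ((m : ℝ) + 1) / 2 ^ n ≤ 1 := by
    have : ((m : ℝ) + 1) = ((m + 1 : ℕ) : ℝ) := by push_cast; ring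
    rw [this]; exact div_pow_le_one hm
  have h3 : (m : ℝ) / 2 ^ n ≤ 1 := div_pow_le_one hm.le
  have h4 : (0:ℝ) ≤ ((m : ℝ) + 1) / 2 ^ n := by positivity
  have := intervalIntegral.integral_add_adjacent_intervals
    (subint hint h1 h3 h4 h2)
    (subint hint (b := (1:ℝ)) h4 h2 (by norm_num) (by norm_num)) (f := ϱ) (μ := volume)
  rw [Ik, Tt, Tt]
  have hc : (((m + 1 : ℕ)) : ℝ) = (m : ℝ) + 1 := by push_cast; ring
  rw [hc]
  exact this.symm

lemma tl_sq (hpos : ∀ x, 0 ≤ ϱ x) {m : ℕ} (hm : m ≤ 2 ^ n) : tl n ϱ m ^ 2 = Tt n ϱ m :=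
  Real.sq_sqrt (Tt_nonneg hpos (div_pow_le_one hm))

lemma psi_sq (hpos : ∀ x, 0 ≤ ϱ x) (k : ℕ) : psi n ϱ k ^ 2 = Ik n ϱ k :=
  Real.sq_sqrt (Ik_nonneg hpos k)

lemma tl_zero_consequences (hpos : ∀ x, 0 ≤ ϱ x) (hint : IntervalIntegrable ϱ volume 0 1)
    {m : ℕ} (hm : m < 2 ^ n) (h : tl n ϱ m = 0) :
    psi n ϱ m = 0 ∧ tl n ϱ (m + 1) = 0 := by
  have hT : Tt n ϱ m = 0 := by
    have h2 := tl_sq hpos hm.le (ϱ := ϱ); rw [h] at h2; simpa using h2.symm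
  have hsplit := Tt_split hint hm (ϱ := ϱ)
  have hI := Ik_nonneg hpos m (n := n)
  have hT' := Tt_nonneg hpos (div_pow_le_one (m := m+1) hm (n := n)) (ϱ := ϱ)
  constructor
  · rw [psi, show Ik n ϱ m = 0 by linarith, Real.sqrt_zero]
  · rw [tl, show Tt n ϱ (m+1) = 0 by linarith, Real.sqrt_zero]

lemma key1 (hpos : ∀ x, 0 ≤ ϱ x) (hint : IntervalIntegrable ϱ volume 0 1)
    {m : ℕ} (hm : m < 2 ^ n) : cc n ϱ m * tl n ϱ m = psi n ϱ m := by
  rw [cc]; split_ifs with h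
  · rw [h, (tl_zero_consequences hpos hint hm h).1, mul_zero]
  · exact div_mul_cancel₀ _ h

lemma key2 (hpos : ∀ x, 0 ≤ ϱ x) (hint : IntervalIntegrable ϱ volume 0 1)
    {m : ℕ} (hm : m < 2 ^ n) : ss n ϱ m * tl n ϱ m = tl n ϱ (m + 1) := by
  rw [ss]; split_ifs with h
  · rw [(tl_zero_consequences hpos hint hm h).2, zero_mul]
  · exact div_mul_cancel₀ _ h

lemma key3 (hpos : ∀ x, 0 ≤ ϱ x) (hint : IntervalIntegrable ϱ volume 0 1)
    {m : ℕ} (hm : m < 2 ^ n) : cc n ϱ m ^ 2 + ss n ϱ m ^ 2 = 1 := by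
  rw [cc, ss]; split_ifs with h
  · norm_num
  · rw [div_pow, div_pow, psi_sq hpos, tl_sq hpos hm.le,
      tl_sq hpos (by omega), ← add_div, ← Tt_split hint hm]
    rw [div_self]
    intro hT
    exact h (by rw [tl, hT, Real.sqrt_zero])

lemma tl_last : tl n ϱ (2 ^ n - 1) = psi n ϱ (2 ^ n - 1) := by
  rw [tl, psi]
  congr 1
  rw [Tt, Ik]
  have h2 : (1:ℕ) ≤ 2 ^ n := Nat.one_le_two_pow
  have hc : ((2 ^ n - 1 : ℕ) : ℝ) = (2 : ℝ) ^ n - 1 := by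
    push_cast [h2]; ring
  rw [hc]
  have hne : (2:ℝ) ^ n ≠ 0 := by positivity
  have h1 : ((2:ℝ) ^ n - 1 + 1) / 2 ^ n = 1 := by field_simp; ring
  rw [h1]

lemma tl_zero_eq_one (hnorm : (∫ x in (0:ℝ)..1, ϱ x) = 1) : tl n ϱ 0 = 1 := by
  rw [tl, Tt]
  norm_num [hnorm]

end Analysis

def bits (n : ℕ) (k : Fin (2 ^ n)) : Fin n → Bool := fun i => Nat.testBit k.1 i.1

lemma bits_inj (n : ℕ) : Function.Injective (bits n) := by
  intro k l h
  apply Fin.ext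
  apply Nat.eq_of_testBit_eq
  intro i
  by_cases hi : i < n
  · exact congrFun h ⟨i, hi⟩
  · rw [Nat.testBit_eq_false_of_lt, Nat.testBit_eq_false_of_lt]
    · exact lt_of_lt_of_le l.2 (Nat.pow_le_pow_right (by norm_num) (le_of_not_gt hi))
    · exact lt_of_lt_of_le k.2 (Nat.pow_le_pow_right (by norm_num) (le_of_not_gt hi))

lemma bits_zero (n : ℕ) (h : 0 < 2 ^ n) : bits n ⟨0, h⟩ = fun _ => false :=
  funext fun i => Nat.zero_testBit i.1

@[simp] lemma rotMat00 (c s : ℝ) : rotMat c s 0 0 = (c : ℂ) := by simp [rotMat]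
@[simp] lemma rotMat01 (c s : ℝ) : rotMat c s 0 1 = -(s : ℂ) := by simp [rotMat]
@[simp] lemma rotMat10 (c s : ℝ) : rotMat c s 1 0 = (s : ℂ) := by simp [rotMat]
@[simp] lemma rotMat11 (c s : ℝ) : rotMat c s 1 1 = (c : ℂ) := by simp [rotMat]

/-- **Grover–Rudolph theorem.**
For `n ≥ 1`, `N = 2ⁿ` and a nonnegative `ϱ` integrable on `[0,1]` with `∫₀¹ ϱ = 1`,
there exists a quantum circuit of length `N - 1`, i.e. a product
`U = W_{N-1} ⋯ W_1` of elementary quantum gates `W_k = f_k(V_k)` (with `V_k ∈ U(2)`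
and `f_k : U(2) → U(N)` injective group homomorphisms, identifying `ℂ^N` with the
`n`-fold tensor power of `ℂ²` indexed by binary words of length `n`), such that
measuring the state `U·e₀` in the computational basis yields outcome `k` with
probability `∫_{k/2ⁿ}^{(k+1)/2ⁿ} ϱ(x) dx` for every `k < 2ⁿ` (where `k` corresponds
to the word of its binary digits). -/
theorem grover_rudolph (n : ℕ) (hn : 1 ≤ n)
    (ϱ : ℝ → ℝ) (hpos : ∀ x, 0 ≤ ϱ x)
    (hint : IntervalIntegrable ϱ volume 0 1)
    (hnorm : (∫ x in (0:ℝ)..1, ϱ x) = 1) :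
    ∃ (V : Fin (2 ^ n - 1) → Matrix.unitaryGroup (Fin 2) ℂ)
      (f : Fin (2 ^ n - 1) →
        (Matrix.unitaryGroup (Fin 2) ℂ →* Matrix.unitaryGroup (Fin n → Bool) ℂ)),
      (∀ k, Function.Injective (f k)) ∧
      ∀ k : ℕ, k < 2 ^ n →
        ‖(((((List.ofFn fun j => (f j) (V j)).reverse).prod :
              Matrix.unitaryGroup (Fin n → Bool) ℂ) :
              Matrix (Fin n → Bool) (Fin n → Bool) ℂ).mulVec
            (Pi.single (fun _ => false) (1 : ℂ)))
            (fun i : Fin n => k.testBit i.val)‖ ^ 2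
          = ∫ x in ((k : ℝ) / 2 ^ n)..(((k : ℝ) + 1) / 2 ^ n), ϱ x := by
  have hN1 : 1 ≤ 2 ^ n := Nat.one_le_two_pow
  have hlt : ∀ j : Fin (2 ^ n - 1), j.1 < 2 ^ n := fun j => by have := j.2; omega
  have hlt' : ∀ j : Fin (2 ^ n - 1), j.1 + 1 < 2 ^ n := fun j => by have := j.2; omega
  let A : Fin (2 ^ n - 1) → (Fin n → Bool) := fun j => bits n ⟨j.1, hlt j⟩
  let B : Fin (2 ^ n - 1) → (Fin n → Bool) := fun j => bits n ⟨j.1 + 1, hlt' j⟩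
  have hAB : ∀ j, A j ≠ B j := by
    intro j h
    have h2 := bits_inj n h
    have h3 : j.1 = j.1 + 1 := congrArg Fin.val h2
    omega
  let Vj : Fin (2 ^ n - 1) → Matrix.unitaryGroup (Fin 2) ℂ := fun j =>
    ⟨rotMat (cc n ϱ j.1) (ss n ϱ j.1), rotMat_mem _ _ (key3 hpos hint (hlt j))⟩
  let fj : Fin (2 ^ n - 1) →
      (Matrix.unitaryGroup (Fin 2) ℂ →* Matrix.unitaryGroup (Fin n → Bool) ℂ) :=
    fun j => twoGateHom (A j) (B j) (hAB j)
  have main : ∀ m (hm : m ≤ 2 ^ n - 1), ∀ i : Fin (2 ^ n),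
      ((((List.ofFn fun j : Fin m =>
            fj (Fin.castLE hm j) (Vj (Fin.castLE hm j))).reverse.prod :
          Matrix.unitaryGroup (Fin n → Bool) ℂ) :
          Matrix (Fin n → Bool) (Fin n → Bool) ℂ).mulVec
        (Pi.single (fun _ => false) (1 : ℂ))) (bits n i)
      = if i.1 < m then (psi n ϱ i.1 : ℂ)
        else if i.1 = m then (tl n ϱ m : ℂ) else 0 := by
    intro m
    induction m with
    | zero =>
      intro hm i
      rw [List.ofFn_zero, List.reverse_nil, List.prod_nil]
      have hone : (((1 : Matrix.unitaryGroup (Fin n → Bool) ℂ) :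
          Matrix (Fin n → Bool) (Fin n → Bool) ℂ)) = 1 := rfl
      rw [hone, Matrix.one_mulVec, Pi.single_apply]
      have hiff : (bits n i = fun _ => false) ↔ i.1 = 0 := by
        constructor
        · intro h
          have h2 : bits n i = bits n ⟨0, by omega⟩ := by rw [h, bits_zero]
          have h3 := bits_inj n h2
          exact congrArg Fin.val h3
        · intro h
          have : i = ⟨0, by omega⟩ := Fin.ext h
          rw [this, bits_zero]
      rw [if_neg (Nat.not_lt_zero _)]
      by_cases h : i.1 = 0
      · rw [if_pos (hiff.mpr h), if_pos h, tl_zero_eq_one hnorm]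
        norm_num
      · rw [if_neg (fun hc => h (hiff.mp hc)), if_neg h]
    | succ m ih =>
      intro hm i
      have hm' : m ≤ 2 ^ n - 1 := by omega
      have hmN : m < 2 ^ n := by omega
      have hm1N : m + 1 < 2 ^ n := by omega
      have hmlt : m < 2 ^ n - 1 := by omega
      set jm : Fin (2 ^ n - 1) := Fin.castLE hm (Fin.last m) with hjm
      rw [List.ofFn_succ', List.concat_eq_append, List.reverse_append, List.reverse_cons,
        List.reverse_nil, List.nil_append, List.singleton_append, List.prod_cons]
      have hcast : (List.ofFn fun j : Fin m =>
            fj (Fin.castLE hm j.castSucc) (Vj (Fin.castLE hm j.castSucc)))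
          = List.ofFn fun j : Fin m => fj (Fin.castLE hm' j) (Vj (Fin.castLE hm' j)) := rfl
      rw [hcast]
      set P := ((List.ofFn fun j : Fin m =>
          fj (Fin.castLE hm' j) (Vj (Fin.castLE hm' j))).reverse.prod :
          Matrix.unitaryGroup (Fin n → Bool) ℂ) with hP
      have hcoe : ((fj jm (Vj jm) * P : Matrix.unitaryGroup (Fin n → Bool) ℂ) :
          Matrix (Fin n → Bool) (Fin n → Bool) ℂ)
          = (fj jm (Vj jm) : Matrix (Fin n → Bool) (Fin n → Bool) ℂ) * (P :
            Matrix (Fin n → Bool) (Fin n → Bool) ℂ) := rfl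
      rw [hcoe, ← Matrix.mulVec_mulVec]
      have hgm : ((fj jm (Vj jm)) : Matrix (Fin n → Bool) (Fin n → Bool) ℂ)
          = gmat (A jm) (B jm) (hAB jm) (rotMat (cc n ϱ m) (ss n ϱ m)) := rfl
      rw [hgm, gmat_mulVec]
      have hAeq : A jm = bits n ⟨m, hmN⟩ := rfl
      have hBeq : B jm = bits n ⟨m + 1, hm1N⟩ := rfl
      have hwA : ((P : Matrix (Fin n → Bool) (Fin n → Bool) ℂ).mulVec
          (Pi.single (fun _ => false) (1 : ℂ))) (A jm) = (tl n ϱ m : ℂ) := by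
        rw [hAeq, ih hm' ⟨m, hmN⟩]
        simp
      have hwB : ((P : Matrix (Fin n → Bool) (Fin n → Bool) ℂ).mulVec
          (Pi.single (fun _ => false) (1 : ℂ))) (B jm) = 0 := by
        rw [hBeq, ih hm' ⟨m + 1, hm1N⟩]
        simp
      have hAiff : ∀ i : Fin (2 ^ n), (bits n i = A jm) ↔ i.1 = m := by
        intro i
        rw [hAeq]
        constructor
        · intro h; exact congrArg Fin.val (bits_inj n h)
        · intro h; have : i = ⟨m, hmN⟩ := Fin.ext h; rw [this]
      have hBiff : ∀ i : Fin (2 ^ n), (bits n i = B jm) ↔ i.1 = m + 1 := by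
        intro i
        rw [hBeq]
        constructor
        · intro h; exact congrArg Fin.val (bits_inj n h)
        · intro h; have : i = ⟨m + 1, hm1N⟩ := Fin.ext h; rw [this]
      by_cases h1 : i.1 = m
      · rw [if_pos ((hAiff i).mpr h1), hwA, hwB]
        rw [if_pos (by omega : i.1 < m + 1), h1]
        have hk1 := key1 hpos hint hmN (n := n) (ϱ := ϱ)
        rw [rotMat00, rotMat01, ← hk1]
        push_cast
        ring
      · rw [if_neg (fun hc => h1 ((hAiff i).mp hc))]
        by_cases h2 : i.1 = m + 1
        · rw [if_pos ((hBiff i).mpr h2), hwA, hwB]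
          rw [if_neg (by omega : ¬ i.1 < m + 1), if_pos h2]
          have hk2 := key2 hpos hint hmN (n := n) (ϱ := ϱ)
          rw [rotMat10, rotMat11, ← hk2]
          push_cast
          ring
        · rw [if_neg (fun hc => h2 ((hBiff i).mp hc)), ih hm' i]
          split_ifs <;> first | rfl | omega
  refine ⟨Vj, fj, fun j => twoGateHom_inj _ _ _, ?_⟩
  intro k hk
  have hmain := main (2 ^ n - 1) le_rfl ⟨k, hk⟩
  have hlist : (List.ofFn fun j : Fin (2 ^ n - 1) =>
      fj (Fin.castLE le_rfl j) (Vj (Fin.castLE le_rfl j)))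
      = List.ofFn fun j => fj j (Vj j) := rfl
  rw [hlist] at hmain
  have hidx : (fun i : Fin n => k.testBit i.val) = bits n ⟨k, hk⟩ := rfl
  rw [hidx, hmain]
  have hIknn := Ik_nonneg hpos k (n := n)
  have hnorm_psi : ‖((psi n ϱ k : ℝ) : ℂ)‖ ^ 2 = Ik n ϱ k := by
    rw [Complex.norm_real, Real.norm_eq_abs, psi,
      abs_of_nonneg (Real.sqrt_nonneg _), Real.sq_sqrt hIknn]
  have hIk : (∫ x in ((k : ℝ) / 2 ^ n)..(((k : ℝ) + 1) / 2 ^ n), ϱ x) = Ik n ϱ k := rfl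
  rw [hIk]
  by_cases h1 : k < 2 ^ n - 1
  · rw [if_pos h1]
    exact hnorm_psi
  · have h2 : k = 2 ^ n - 1 := by omega
    rw [if_neg (h1 : ¬ (⟨k, hk⟩ : Fin (2 ^ n)).1 < 2 ^ n - 1),
      if_pos (by exact h2 : (⟨k, hk⟩ : Fin (2 ^ n)).1 = 2 ^ n - 1)]
    rw [tl_last, ← h2]
    exact hnorm_psi
end
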